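/- arXiv:2102.00530 — 7 statements merged into one kernel-verified Lean document; each statement's English description precedes it below -/
import Mathlib

section
/- There exists a constant C > 0 such that for all positive integers k and ℓ, |P_{k,ℓ} - e^{-k}·∑_{ν=0}^{k-1} k^ν/ν!| ≤ C·k²/ℓ. -/
set_option maxHeartbeats 1000000

open Finset Real

noncomputable def P (k l : ℕ) : ℝ :=
  ((l : ℝ) / (l + k)) ^ (k + l) *
    ∑ ν ∈ Finset.range k, (Nat.choose (k + l) ν : ℝ) * ((k : ℝ) / l) ^ ν

lemma weier (ν : ℕ) (f : ℕ → ℝ) (h0 : ∀ i < ν, 0 ≤ f i) (h1 : ∀ i < ν, f i ≤ 1) :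
    1 - ∑ i ∈ range ν, f i ≤ ∏ i ∈ range ν, (1 - f i) := by
  induction ν with
  | zero => simp
  | succ n ih =>
    rw [prod_range_succ, sum_range_succ]
    have hp : 0 ≤ ∏ i ∈ range n, (1 - f i) :=
      prod_nonneg fun i hi => by linarith [h1 i ((mem_range.mp hi).trans n.lt_succ_self)]
    have hp1 : ∏ i ∈ range n, (1 - f i) ≤ 1 :=
      prod_le_one (fun i hi => by linarith [h1 i ((mem_range.mp hi).trans n.lt_succ_self)])
        (fun i hi => by linarith [h0 i ((mem_range.mp hi).trans n.lt_succ_self)])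
    have ih' := ih (fun i hi => h0 i (hi.trans n.lt_succ_self))
      (fun i hi => h1 i (hi.trans n.lt_succ_self))
    nlinarith [h0 n n.lt_succ_self, h1 n n.lt_succ_self]

lemma exp_upper {x : ℝ} (h0 : 0 ≤ x) (h2 : x ≤ 1/2) : exp x ≤ 1 + 2 * x := by
  have h1 : 1 - x ≤ exp (-x) := by linarith [Real.add_one_le_exp (-x)]
  have h3 : exp x * exp (-x) = 1 := by rw [← Real.exp_add]; simp
  have h4 : exp x * (1 - x) ≤ 1 := by nlinarith [(Real.exp_pos x).le]
  nlinarith [Real.exp_pos x]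

lemma one_sub_ge_exp {x : ℝ} (h0 : 0 ≤ x) (h1 : x < 1) :
    exp (-(x / (1 - x))) ≤ 1 - x := by
  have hx : (0:ℝ) < 1 - x := by linarith
  have h2 : 1 + x / (1 - x) ≤ exp (x / (1 - x)) := by linarith [Real.add_one_le_exp (x / (1-x))]
  have h3 : (1 - x)⁻¹ = 1 + x / (1 - x) := by field_simp; ring
  rw [Real.exp_neg, inv_le_comm₀ (Real.exp_pos _) hx, h3]
  exact h2

lemma choose_cast (n ν : ℕ) (hν : ν ≤ n) :
    (Nat.choose n ν : ℝ) = (∏ i ∈ range ν, ((n : ℝ) - i)) / (Nat.factorial ν : ℝ) := by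
  have h1 : (n.descFactorial ν : ℝ) = ∏ i ∈ range ν, ((n : ℝ) - i) := by
    rw [Nat.descFactorial_eq_prod_range, Nat.cast_prod]
    refine prod_congr rfl fun i hi => ?_
    have : i ≤ n := le_trans (mem_range.mp hi).le hν
    push_cast [Nat.cast_sub this]
    ring
  have h2 : (n.descFactorial ν : ℝ) = (Nat.factorial ν : ℝ) * (Nat.choose n ν : ℝ) := by
    exact_mod_cast congrArg (Nat.cast : ℕ → ℝ) (Nat.descFactorial_eq_factorial_mul_choose n ν)
  have hf : (Nat.factorial ν : ℝ) ≠ 0 := by positivity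
  rw [h2] at h1
  field_simp
  linarith [h1]

lemma term_bound (k l ν : ℕ) (hk : 1 ≤ k) (hν : ν < k) (hl2 : 2 * k ^ 2 ≤ l) :
    |(Nat.choose (k + l) ν : ℝ) * ((k : ℝ) / ((k : ℝ) + l)) ^ ν * ((l : ℝ) / ((k : ℝ) + l)) ^ (k + l - ν)
      - Real.exp (-(k : ℝ)) * ((k : ℝ) ^ ν / Nat.factorial ν)|
      ≤ Real.exp (-(k : ℝ)) * ((k : ℝ) ^ ν / Nat.factorial ν) * (2 * (k : ℝ) ^ 2 / l) := by
  have hK1 : (1:ℝ) ≤ (k:ℝ) := by exact_mod_cast hk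
  set K : ℝ := (k : ℝ) with hKdef
  set L : ℝ := (l : ℝ) with hLdef
  have hL2 : 2 * K ^ 2 ≤ L := by rw [hKdef, hLdef]; exact_mod_cast hl2
  have hKpos : 0 < K := by linarith
  have hLpos : 0 < L := by nlinarith
  have hNpos : 0 < K + L := by linarith
  have hνK : (ν : ℝ) ≤ K := by rw [hKdef]; exact_mod_cast hν.le
  have hνn : ν ≤ k + l := by omega
  have ha2 : (0:ℝ) < K^2/L := by positivity
  have ha : K ^ 2 / L ≤ 1 / 2 := by rw [div_le_div_iff₀ hLpos (by norm_num)]; linarith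
  set A : ℝ := ∏ i ∈ range ν, (1 - (i : ℝ) / (K + L)) with hAdef
  set m : ℕ := k + l - ν with hmdef
  set B : ℝ := (L / (K + L)) ^ m with hBdef
  have hmcast : ((m : ℕ) : ℝ) = K + L - ν := by
    rw [hmdef, Nat.cast_sub hνn]; push_cast; ring
  -- rewrite the binomial term
  have hb : (Nat.choose (k + l) ν : ℝ) * (K / (K + L)) ^ ν * (L / (K + L)) ^ (k + l - ν)
      = K ^ ν / (Nat.factorial ν : ℝ) * (A * B) := by
    rw [choose_cast (k + l) ν hνn]
    have hcast : ∏ i ∈ range ν, (((k + l : ℕ) : ℝ) - i) = ∏ i ∈ range ν, (K + L - i) := by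
      refine prod_congr rfl fun i _ => ?_; push_cast; ring
    have hA' : A = (∏ i ∈ range ν, (K + L - i)) / (K + L) ^ ν := by
      rw [hAdef]
      rw [show (∏ i ∈ range ν, (1 - (i:ℝ) / (K + L)))
          = ∏ i ∈ range ν, ((K + L - i) / (K + L)) from
        prod_congr rfl fun i _ => by field_simp]
      rw [prod_div_distrib, prod_const, card_range]
    rw [hcast, ← hmdef, hA', div_pow]
    ring
  -- bounds on A
  have hf0 : ∀ i < ν, (0:ℝ) ≤ (i:ℝ) / (K + L) := fun i _ => by positivity
  have hf1 : ∀ i < ν, (i:ℝ) / (K + L) ≤ 1 := fun i hi => by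
    rw [div_le_one hNpos]
    have : (i:ℝ) ≤ ν := by exact_mod_cast hi.le
    linarith
  have hA1 : A ≤ 1 :=
    prod_le_one (fun i hi => by linarith [hf1 i (mem_range.mp hi)])
      (fun i hi => by linarith [hf0 i (mem_range.mp hi)])
  have hsum : ∑ i ∈ range ν, (i:ℝ) / (K + L) ≤ K^2 / (K + L) := by
    rw [← sum_div]
    gcongr
    have hle : ∀ i ∈ range ν, (i:ℝ) ≤ K := fun i hi => by
      have h1 : (i:ℝ) ≤ (ν:ℝ) := by exact_mod_cast (mem_range.mp hi).le
      linarith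
    calc ∑ i ∈ range ν, (i:ℝ) ≤ (range ν).card • K := sum_le_card_nsmul _ _ _ hle
      _ = (ν:ℝ) * K := by rw [card_range, nsmul_eq_mul]
      _ ≤ K ^ 2 := by nlinarith
  have hAge : 1 - K^2/(K+L) ≤ A := by
    refine le_trans ?_ (weier ν _ hf0 hf1)
    linarith [hsum]
  -- bounds on B
  set x : ℝ := K / (K + L) with hxdef
  have hx0 : 0 < x := by positivity
  have hx1 : x < 1 := by rw [hxdef, div_lt_one hNpos]; linarith
  have h1x : L / (K + L) = 1 - x := by rw [hxdef]; field_simp; ring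
  have hBup : B ≤ exp ((m:ℝ) * (-x)) := by
    rw [hBdef, h1x, Real.exp_nat_mul]
    exact pow_le_pow_left₀ (by linarith) (by linarith [Real.add_one_le_exp (-x)]) m
  have hxx : x / (1 - x) = K / L := by
    rw [← h1x, hxdef]
    rw [div_div_div_eq, mul_comm K (K+L), mul_div_mul_left _ _ hNpos.ne']
  have hBlow : exp ((m:ℝ) * (-(K/L))) ≤ B := by
    rw [hBdef, h1x, Real.exp_nat_mul]
    apply pow_le_pow_left₀ (Real.exp_pos _).le
    rw [← hxx]
    exact one_sub_ge_exp hx0.le hx1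
  -- upper estimate on A * B
  have hAB0 : 0 ≤ A * B := by
    have hA0 : 0 ≤ A :=
      prod_nonneg fun i hi => by linarith [hf1 i (mem_range.mp hi)]
    have : 0 ≤ B := by rw [hBdef]; positivity
    positivity
  have hup : A * B ≤ exp (-K) * (1 + 2 * (K^2/L)) := by
    have h1 : (m:ℝ) * (-x) = -K + (ν:ℝ) * K / (K + L) := by
      rw [hmcast, hxdef]; field_simp; ring
    have h2 : (ν:ℝ) * K / (K + L) ≤ K^2/L := by
      rw [div_le_div_iff₀ hNpos hLpos]
      nlinarith [mul_le_mul_of_nonneg_right (mul_le_mul_of_nonneg_right hνK hKpos.le) hLpos.le,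
        mul_pos (mul_pos hKpos hKpos) hKpos, sq_nonneg K]
    have h3 : (0:ℝ) ≤ (ν:ℝ) * K / (K + L) := by positivity
    have h4 : exp ((ν:ℝ) * K / (K + L)) ≤ 1 + 2 * (K^2/L) := by
      calc exp ((ν:ℝ) * K / (K + L)) ≤ 1 + 2 * ((ν:ℝ) * K / (K + L)) :=
            exp_upper h3 (by linarith)
        _ ≤ 1 + 2 * (K^2/L) := by linarith
    have hBnn : 0 ≤ B := by rw [hBdef]; positivity
    calc A * B ≤ B := by nlinarith [hA1, hBnn, hAB0]
      _ ≤ exp ((m:ℝ) * (-x)) := hBup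
      _ = exp (-K) * exp ((ν:ℝ) * K / (K + L)) := by rw [h1, Real.exp_add]
      _ ≤ exp (-K) * (1 + 2 * (K^2/L)) := by
          exact mul_le_mul_of_nonneg_left h4 (Real.exp_pos _).le
  have hlow : exp (-K) * (1 - 2 * (K^2/L)) ≤ A * B := by
    have h1 : (m:ℝ) * (-(K/L)) ≥ -K - K^2/L := by
      have heq : (m:ℝ) * (-(K/L)) = -((K + L - ν) * K / L) := by rw [hmcast]; ring
      have hstep : (K + L - ν) * K / L ≤ K + K^2/L := by
        rw [div_le_iff₀ hLpos, add_mul, div_mul_cancel₀ _ hLpos.ne']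
        nlinarith [mul_nonneg (Nat.cast_nonneg ν : (0:ℝ) ≤ (ν:ℝ)) hKpos.le]
      rw [heq]
      linarith
    have h2 : exp (-K) * (1 - K^2/L) ≤ B := by
      calc exp (-K) * (1 - K^2/L) ≤ exp (-K) * exp (-(K^2/L)) := by
            have := Real.add_one_le_exp (-(K^2/L))
            nlinarith [Real.exp_pos (-K)]
        _ = exp (-K - K^2/L) := by rw [← Real.exp_add]; ring_nf
        _ ≤ exp ((m:ℝ) * (-(K/L))) := Real.exp_le_exp.mpr (by linarith)
        _ ≤ B := hBlow
    have hA' : 1 - K^2/L ≤ A := by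
      have : K^2/(K+L) ≤ K^2/L := by
        apply div_le_div_of_nonneg_left (by positivity) hLpos (by linarith)
      linarith [hAge]
    have hBnn : 0 ≤ B := by rw [hBdef]; positivity
    nlinarith [Real.exp_pos (-K), hA', h2, hBnn]
  -- combine
  rw [hb]
  have hdiff : K ^ ν / (Nat.factorial ν : ℝ) * (A * B) - exp (-K) * (K ^ ν / Nat.factorial ν)
      = K ^ ν / (Nat.factorial ν : ℝ) * (A * B - exp (-K)) := by ring
  rw [hdiff, abs_mul]
  have hnn : (0:ℝ) ≤ K ^ ν / (Nat.factorial ν : ℝ) := by positivity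
  rw [abs_of_nonneg hnn]
  have habs : |A * B - exp (-K)| ≤ exp (-K) * (2 * K^2/L) := by
    have e1 : exp (-K) * (1 - 2 * (K^2/L)) = exp (-K) - exp (-K) * (2 * K^2/L) := by ring
    have e2 : exp (-K) * (1 + 2 * (K^2/L)) = exp (-K) + exp (-K) * (2 * K^2/L) := by ring
    rw [e1] at hlow
    rw [e2] at hup
    rw [abs_le]
    constructor
    · linarith
    · linarith
  calc K ^ ν / (Nat.factorial ν : ℝ) * |A * B - exp (-K)|
      ≤ K ^ ν / (Nat.factorial ν : ℝ) * (exp (-K) * (2 * K^2/L)) :=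
        mul_le_mul_of_nonneg_left habs hnn
    _ = exp (-K) * (K ^ ν / Nat.factorial ν) * (2 * K^2/L) := by ring

lemma P_eq (k l : ℕ) (hk : 1 ≤ k) (hl : 1 ≤ l) :
    P k l = ∑ ν ∈ range k, (Nat.choose (k + l) ν : ℝ) * ((k : ℝ) / ((k:ℝ) + l)) ^ ν *
      ((l : ℝ) / ((k:ℝ) + l)) ^ (k + l - ν) := by
  have hL : (0:ℝ) < l := by exact_mod_cast hl
  have hK : (0:ℝ) < k := by exact_mod_cast hk
  have hN : (0:ℝ) < (k:ℝ) + l := by linarith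
  rw [P, mul_sum]
  refine sum_congr ?_ fun ν hν => ?_
  · rfl
  have hνk : ν < k := mem_range.mp hν
  have hc : ((l:ℝ) + k) = (k:ℝ) + l := by ring
  rw [hc]
  have hpow : ((l:ℝ)/((k:ℝ)+l)) ^ (k+l)
      = ((l:ℝ)/((k:ℝ)+l)) ^ ν * ((l:ℝ)/((k:ℝ)+l)) ^ (k+l-ν) := by
    rw [← pow_add]; congr 1; omega
  have hmul : ((l:ℝ)/((k:ℝ)+l)) ^ ν * ((k:ℝ)/(l:ℝ)) ^ ν = ((k:ℝ)/((k:ℝ)+l)) ^ ν := by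
    rw [← mul_pow]; congr 1; field_simp
  rw [hpow, ← hmul]; ring

lemma P_nonneg (k l : ℕ) (hk : 1 ≤ k) (hl : 1 ≤ l) : 0 ≤ P k l := by
  rw [P_eq k l hk hl]
  refine sum_nonneg fun ν _ => ?_
  have hL : (0:ℝ) ≤ l := Nat.cast_nonneg l
  have hK : (0:ℝ) ≤ k := Nat.cast_nonneg k
  have hN : (0:ℝ) < (k:ℝ) + l := by
    have : (1:ℝ) ≤ k := by exact_mod_cast hk
    linarith
  positivity

lemma P_le_one (k l : ℕ) (hk : 1 ≤ k) (hl : 1 ≤ l) : P k l ≤ 1 := by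
  have hL : (0:ℝ) < l := by exact_mod_cast hl
  have hK : (0:ℝ) < k := by exact_mod_cast hk
  have hN : (0:ℝ) < (k:ℝ) + l := by linarith
  rw [P_eq k l hk hl]
  have key : ∑ ν ∈ range (k + l + 1), (Nat.choose (k + l) ν : ℝ) * ((k : ℝ) / ((k:ℝ) + l)) ^ ν *
      ((l : ℝ) / ((k:ℝ) + l)) ^ (k + l - ν) = 1 := by
    have hadd := add_pow ((k:ℝ)/((k:ℝ)+l)) ((l:ℝ)/((k:ℝ)+l)) (k+l)
    have h1 : (k:ℝ)/((k:ℝ)+l) + (l:ℝ)/((k:ℝ)+l) = 1 := by field_simp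
    rw [h1, one_pow] at hadd
    calc ∑ ν ∈ range (k + l + 1), (Nat.choose (k + l) ν : ℝ) * ((k : ℝ) / ((k:ℝ) + l)) ^ ν *
          ((l : ℝ) / ((k:ℝ) + l)) ^ (k + l - ν)
        = ∑ ν ∈ range (k + l + 1), ((k:ℝ)/((k:ℝ)+l)) ^ ν * ((l:ℝ)/((k:ℝ)+l)) ^ (k + l - ν) *
          (Nat.choose (k + l) ν : ℝ) := sum_congr rfl fun ν _ => by ring
      _ = 1 := hadd.symm
  calc ∑ ν ∈ range k, (Nat.choose (k + l) ν : ℝ) * ((k : ℝ) / ((k:ℝ) + l)) ^ ν *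
        ((l : ℝ) / ((k:ℝ) + l)) ^ (k + l - ν)
      ≤ ∑ ν ∈ range (k + l + 1), (Nat.choose (k + l) ν : ℝ) * ((k : ℝ) / ((k:ℝ) + l)) ^ ν *
        ((l : ℝ) / ((k:ℝ) + l)) ^ (k + l - ν) := by
        refine sum_le_sum_of_subset_of_nonneg (range_subset_range.mpr (by omega)) fun ν _ _ => by positivity
    _ = 1 := key

theorem P_poisson_approx :
    ∃ C > 0, ∀ k l : ℕ, 1 ≤ k → 1 ≤ l →
      |P k l - Real.exp (-(k : ℝ)) * ∑ ν ∈ Finset.range k, (k : ℝ) ^ ν / Nat.factorial ν| ≤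
        C * k ^ 2 / l := by
  refine ⟨4, by norm_num, fun k l hk hl => ?_⟩
  have hL : (1:ℝ) ≤ l := by exact_mod_cast hl
  have hK : (1:ℝ) ≤ k := by exact_mod_cast hk
  have hLpos : (0:ℝ) < l := by linarith
  have hE0 : 0 ≤ Real.exp (-(k:ℝ)) * ∑ ν ∈ range k, (k:ℝ) ^ ν / Nat.factorial ν := by
    refine mul_nonneg (Real.exp_pos _).le (sum_nonneg fun ν _ => by positivity)
  have hE1 : Real.exp (-(k:ℝ)) * ∑ ν ∈ range k, (k:ℝ) ^ ν / Nat.factorial ν ≤ 1 := by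
    have hsum := Real.sum_le_exp_of_nonneg (by positivity : (0:ℝ) ≤ (k:ℝ)) k
    have h2 : Real.exp (-(k:ℝ)) * Real.exp (k:ℝ) = 1 := by
      rw [← Real.exp_add]; simp
    nlinarith [Real.exp_pos (-(k:ℝ))]
  by_cases hc : 2 * k ^ 2 ≤ l
  · have hc' : 2 * (k:ℝ) ^ 2 ≤ l := by exact_mod_cast hc
    rw [P_eq k l hk hl, mul_sum, ← sum_sub_distrib]
    refine le_trans (Finset.abs_sum_le_sum_abs _ _) ?_
    calc ∑ ν ∈ range k, |(Nat.choose (k + l) ν : ℝ) * ((k : ℝ) / ((k:ℝ) + l)) ^ ν *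
          ((l : ℝ) / ((k:ℝ) + l)) ^ (k + l - ν)
          - Real.exp (-(k:ℝ)) * ((k:ℝ) ^ ν / Nat.factorial ν)|
        ≤ ∑ ν ∈ range k, Real.exp (-(k:ℝ)) * ((k:ℝ) ^ ν / Nat.factorial ν) * (2 * (k:ℝ)^2 / l) :=
          sum_le_sum fun ν hν => term_bound k l ν hk (mem_range.mp hν) hc
      _ = (Real.exp (-(k:ℝ)) * ∑ ν ∈ range k, (k:ℝ) ^ ν / Nat.factorial ν) * (2 * (k:ℝ)^2 / l) := by
          rw [mul_sum, sum_mul]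
      _ ≤ 1 * (2 * (k:ℝ)^2 / l) := by
          refine mul_le_mul_of_nonneg_right hE1 (by positivity)
      _ ≤ 4 * (k:ℝ)^2 / l := by
          rw [one_mul]
          gcongr
          nlinarith [sq_nonneg (k:ℝ)]
  · push_neg at hc
    have hc' : (l:ℝ) ≤ 2 * (k:ℝ) ^ 2 := by exact_mod_cast hc.le
    have h2 : (2:ℝ) ≤ 4 * (k:ℝ)^2 / l := by
      rw [le_div_iff₀ hLpos]
      nlinarith
    have hP0 := P_nonneg k l hk hl
    have hP1 := P_le_one k l hk hl
    have : |P k l - Real.exp (-(k:ℝ)) * ∑ ν ∈ range k, (k:ℝ) ^ ν / Nat.factorial ν| ≤ 2 :=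
      abs_le.mpr ⟨by linarith, by linarith⟩
    linarith
end

section
/- For every positive integer ℓ, ∑_{ν=0}^{ℓ-1} ℓ^ν/ν! < (1/2)·e^ℓ < ∑_{ν=0}^{ℓ} ℓ^ν/ν!. -/
open Finset Set MeasureTheory

private lemma fact_aux : ∀ (k m l : ℕ), l = m + k + 1 →
    Nat.factorial (l + k) ≤ l ^ (2 * k + 1) * Nat.factorial m := by
  intro k
  induction k with
  | zero =>
    intro m l h
    subst h
    simp [Nat.factorial_succ, pow_succ]
  | succ k ih =>
    intro m l h
    have h' : l = (m + 1) + k + 1 := by omega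
    have H := ih (m + 1) l h'
    have hfac : Nat.factorial (l + (k + 1)) = (l + k + 1) * Nat.factorial (l + k) := by
      rw [show l + (k + 1) = (l + k) + 1 by ring, Nat.factorial_succ]
    calc Nat.factorial (l + (k + 1)) = (l + k + 1) * Nat.factorial (l + k) := hfac
      _ ≤ (l + k + 1) * (l ^ (2 * k + 1) * Nat.factorial (m + 1)) := Nat.mul_le_mul_left _ H
      _ = ((l + k + 1) * (m + 1)) * (l ^ (2 * k + 1) * Nat.factorial m) := by
          rw [Nat.factorial_succ]; ring
      _ ≤ (l * l) * (l ^ (2 * k + 1) * Nat.factorial m) := by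
          apply Nat.mul_le_mul_right
          subst h; nlinarith [sq_nonneg (k + 1)]
      _ = l ^ (2 * (k + 1) + 1) * Nat.factorial m := by ring

private lemma term_le (l k : ℕ) (hk : k + 1 ≤ l) :
    (l : ℝ) ^ (l - 1 - k) / Nat.factorial (l - 1 - k) ≤ (l : ℝ) ^ (l + k) / Nat.factorial (l + k) := by
  set m := l - 1 - k with hm
  have hlm : l = m + k + 1 := by omega
  have h := fact_aux k m l hlm
  have h1 : ((Nat.factorial (l + k) : ℝ)) ≤ (l : ℝ) ^ (2 * k + 1) * Nat.factorial m := by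
    exact_mod_cast h
  have hf1 : (0:ℝ) < Nat.factorial m := by exact_mod_cast Nat.factorial_pos m
  have hf2 : (0:ℝ) < Nat.factorial (l + k) := by exact_mod_cast Nat.factorial_pos (l + k)
  rw [div_le_div_iff₀ hf1 hf2]
  have hpow : (l:ℝ) ^ (l + k) = (l:ℝ) ^ (2 * k + 1) * (l:ℝ) ^ m := by
    rw [← pow_add]; congr 1; omega
  rw [hpow]
  have hl0 : (0:ℝ) ≤ (l:ℝ) ^ m := by positivity
  calc (l:ℝ) ^ m * Nat.factorial (l + k) ≤ (l:ℝ) ^ m * ((l:ℝ) ^ (2 * k + 1) * Nat.factorial m) :=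
        mul_le_mul_of_nonneg_left h1 hl0
    _ = (l:ℝ) ^ (2 * k + 1) * (l:ℝ) ^ m * Nat.factorial m := by ring

private lemma first_half (l : ℕ) (hl : 1 ≤ l) :
    (∑ ν ∈ Finset.range l, (l : ℝ) ^ ν / Nat.factorial ν) < (1 / 2) * Real.exp l := by
  set f : ℕ → ℝ := fun ν => (l : ℝ) ^ ν / Nat.factorial ν with hf
  have hrefl : ∑ ν ∈ range l, f (l - 1 - ν) = ∑ ν ∈ range l, f ν := Finset.sum_range_reflect f l
  have hle : ∑ ν ∈ range l, f ν ≤ ∑ ν ∈ range l, f (l + ν) := by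
    rw [← hrefl]
    apply Finset.sum_le_sum
    intro k hk
    exact term_le l k (Finset.mem_range.mp hk)
  have hsplit : ∑ ν ∈ range (l + l), f ν = ∑ ν ∈ range l, f ν + ∑ ν ∈ range l, f (l + ν) :=
    Finset.sum_range_add f l l
  have hpos : 0 < f (l + l) := by
    have : (0:ℝ) < (l:ℝ) := by exact_mod_cast hl
    have : (0:ℝ) < Nat.factorial (l + l) := by exact_mod_cast Nat.factorial_pos (l + l)
    positivity
  have hexp : ∑ ν ∈ range (l + l + 1), f ν ≤ Real.exp l :=
    Real.sum_le_exp_of_nonneg (by positivity) _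
  rw [Finset.sum_range_succ] at hexp
  have : 2 * ∑ ν ∈ range l, f ν < Real.exp l := by
    have := hsplit
    nlinarith [hle, hpos, hexp]
  linarith

private lemma key_ineq {x : ℝ} (hx : 0 < x) : (1 - x) * Real.exp (2 * x) < 1 + x := by
  set g : ℝ → ℝ := fun t => (1 + t) * Real.exp (-t) - (1 - t) * Real.exp t with hg
  have hderiv : ∀ y : ℝ, HasDerivAt g (y * (Real.exp y - Real.exp (-y))) y := by
    intro y
    have hexp : HasDerivAt (fun t : ℝ => Real.exp (-t)) (-Real.exp (-y)) y := by
      simpa using (hasDerivAt_neg y).exp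
    have h1 : HasDerivAt (fun t : ℝ => (1 + t) * Real.exp (-t))
        (1 * Real.exp (-y) + (1 + y) * (-Real.exp (-y))) y :=
      ((hasDerivAt_id y).const_add 1).mul hexp
    have h2 : HasDerivAt (fun t : ℝ => (1 - t) * Real.exp t)
        ((-1) * Real.exp y + (1 - y) * Real.exp y) y :=
      ((hasDerivAt_id y).const_sub 1).mul (Real.hasDerivAt_exp y)
    have := h1.sub h2
    exact this.congr_deriv (by ring)
  have hmono : StrictMonoOn g (Ici (0:ℝ)) := by
    apply strictMonoOn_of_deriv_pos (convex_Ici 0)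
    · exact fun y _ => (hderiv y).differentiableAt.continuousAt.continuousWithinAt
    · intro y hy
      rw [interior_Ici] at hy
      rw [(hderiv y).deriv]
      have : Real.exp (-y) < Real.exp y := Real.exp_lt_exp.mpr (by linarith [hy.out])
      have hy' : 0 < y := hy
      nlinarith
  have hgx : 0 < g x := by
    have := hmono (self_mem_Ici) (le_of_lt hx : (0:ℝ) ≤ x) hx
    simpa [hg] using this
  have h : (1 - x) * Real.exp x < (1 + x) * Real.exp (-x) := by
    simp only [hg] at hgx; linarith
  have := mul_lt_mul_of_pos_right h (Real.exp_pos x)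
  calc (1 - x) * Real.exp (2 * x) = (1 - x) * Real.exp x * Real.exp x := by
        rw [mul_assoc, ← Real.exp_add]; ring_nf
    _ < (1 + x) * Real.exp (-x) * Real.exp x := this
    _ = 1 + x := by rw [mul_assoc, ← Real.exp_add]; simp

private lemma reflect_lt (l : ℕ) (hl : 1 ≤ l) {s : ℝ} (hs0 : 0 < s) (hsl : s < l) :
    Real.exp (-((l:ℝ) - s)) * ((l:ℝ) - s) ^ l < Real.exp (-((l:ℝ) + s)) * ((l:ℝ) + s) ^ l := by
  set L : ℝ := (l : ℝ) with hL
  have hL0 : 0 < L := by simp only [hL, Nat.cast_pos]; omega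
  have hx : 0 < s / L := div_pos hs0 hL0
  have key := key_ineq hx
  have hkey : (L - s) * Real.exp (2 * (s / L)) < L + s := by
    have := mul_lt_mul_of_pos_left key hL0
    calc (L - s) * Real.exp (2 * (s / L)) = L * ((1 - s / L) * Real.exp (2 * (s / L))) := by
          field_simp
      _ < L * (1 + s / L) := this
      _ = L + s := by field_simp
  have hnn : 0 ≤ (L - s) * Real.exp (2 * (s / L)) := by
    have : 0 ≤ L - s := by linarith
    positivity
  have hpow : ((L - s) * Real.exp (2 * (s / L))) ^ l < (L + s) ^ l :=
    pow_lt_pow_left₀ hkey hnn (by omega)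
  have hexp_pow : (Real.exp (2 * (s / L))) ^ l = Real.exp (2 * s) := by
    rw [← Real.exp_nat_mul]
    congr 1
    field_simp
    exact hL.symm
  have hlt : (L - s) ^ l * Real.exp (2 * s) < (L + s) ^ l := by
    calc (L - s) ^ l * Real.exp (2 * s) = ((L - s) * Real.exp (2 * (s / L))) ^ l := by
          rw [mul_pow, hexp_pow]
      _ < (L + s) ^ l := hpow
  have := mul_lt_mul_of_pos_right hlt (Real.exp_pos (-(L + s)))
  calc Real.exp (-(L - s)) * (L - s) ^ l
      = (L - s) ^ l * Real.exp (2 * s) * Real.exp (-(L + s)) := by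
        rw [mul_assoc, ← Real.exp_add, mul_comm]; ring_nf
    _ < (L + s) ^ l * Real.exp (-(L + s)) := this
    _ = Real.exp (-(L + s)) * (L + s) ^ l := by ring

private lemma hasDerivAt_partial (n : ℕ) (x : ℝ) :
    HasDerivAt (fun t : ℝ => ∑ ν ∈ range (n + 1), t ^ ν / Nat.factorial ν)
      (∑ ν ∈ range n, x ^ ν / Nat.factorial ν) x := by
  have h : HasDerivAt (fun t : ℝ => ∑ ν ∈ range (n + 1), t ^ ν / Nat.factorial ν)
      (∑ ν ∈ range (n + 1), (ν : ℝ) * x ^ (ν - 1) / Nat.factorial ν) x := by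
    apply HasDerivAt.fun_sum
    intro ν _
    simpa [div_eq_mul_inv] using (hasDerivAt_pow ν x).div_const (Nat.factorial ν : ℝ)
  convert h using 1
  rw [Finset.sum_range_succ' (fun ν => (ν : ℝ) * x ^ (ν - 1) / Nat.factorial ν) n]
  simp only [Nat.cast_zero, zero_mul, Nat.factorial_zero, Nat.cast_one, zero_div, add_zero]
  apply Finset.sum_congr rfl
  intro i _
  have hfac : ((Nat.factorial (i + 1) : ℝ)) = (i + 1) * Nat.factorial i := by
    rw [Nat.factorial_succ]; push_cast; ring
  have hip : (0:ℝ) < (i:ℝ) + 1 := by positivity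
  have hfp : (0:ℝ) < Nat.factorial i := by exact_mod_cast Nat.factorial_pos i
  rw [show ((i:ℕ)+1 : ℕ) - 1 = i from rfl]
  push_cast
  rw [hfac]
  rw [mul_comm ((i:ℝ) + 1) (Nat.factorial i : ℝ)]
  rw [mul_div_assoc]
  field_simp

private lemma partial_eq (n : ℕ) (b : ℝ) :
    Real.exp (-b) * ∑ ν ∈ range (n + 1), b ^ ν / Nat.factorial ν
      = 1 - ∫ t in (0:ℝ)..b, Real.exp (-t) * t ^ n / Nat.factorial n := by
  set F : ℝ → ℝ := fun t => Real.exp (-t) * ∑ ν ∈ range (n + 1), t ^ ν / Nat.factorial ν with hF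
  have hder : ∀ x : ℝ, HasDerivAt F (-(Real.exp (-x) * x ^ n / Nat.factorial n)) x := by
    intro x
    have hexp : HasDerivAt (fun t : ℝ => Real.exp (-t)) (-Real.exp (-x)) x := by
      simpa using (hasDerivAt_neg x).exp
    have := hexp.mul (hasDerivAt_partial n x)
    exact this.congr_deriv (by rw [Finset.sum_range_succ]; ring)
  have hcont : Continuous fun t : ℝ => -(Real.exp (-t) * t ^ n / Nat.factorial n) := by
    continuity
  have hint := intervalIntegral.integral_eq_sub_of_hasDerivAt
    (f := F) (f' := fun t => -(Real.exp (-t) * t ^ n / Nat.factorial n))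
    (a := 0) (b := b) (fun t _ => hder t) (hcont.intervalIntegrable 0 b)
  have hF0 : F 0 = 1 := by
    have hs : ∑ ν ∈ range (n + 1), (0:ℝ) ^ ν / Nat.factorial ν = 1 := by
      rw [Finset.sum_eq_single 0 (fun b _ hb => by simp [zero_pow hb])
        (fun h => absurd (Finset.mem_range.mpr (Nat.succ_pos n)) h)]
      simp
    simp [hF, hs]
  rw [intervalIntegral.integral_neg] at hint
  have : -(∫ t in (0:ℝ)..b, Real.exp (-t) * t ^ n / Nat.factorial n) = F b - 1 := by
    rw [← hF0]; exact hint
  simp only [hF] at this ⊢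
  linarith

private lemma second_half (l : ℕ) (hl : 1 ≤ l) :
    (1 / 2) * Real.exp l < ∑ ν ∈ Finset.range (l + 1), (l : ℝ) ^ ν / Nat.factorial ν := by
  have hL0 : (0:ℝ) < (l:ℝ) := by exact_mod_cast hl
  set f : ℝ → ℝ := fun t => Real.exp (-t) * t ^ l with hf
  have hcont : Continuous f := by fun_prop
  have h1 : ∫ s in (0:ℝ)..(l:ℝ), f ((l:ℝ) - s) = ∫ t in (0:ℝ)..(l:ℝ), f t := by
    rw [intervalIntegral.integral_comp_sub_left f (l:ℝ)]
    norm_num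
  have h2 : ∫ s in (0:ℝ)..(l:ℝ), f ((l:ℝ) + s) = ∫ t in (l:ℝ)..((l:ℝ) + (l:ℝ)), f t := by
    rw [intervalIntegral.integral_comp_add_left f (l:ℝ)]
    norm_num
  have hlt : ∫ s in (0:ℝ)..(l:ℝ), f ((l:ℝ) - s) < ∫ s in (0:ℝ)..(l:ℝ), f ((l:ℝ) + s) := by
    apply intervalIntegral.integral_lt_integral_of_continuousOn_of_le_of_exists_lt hL0
    · exact (hcont.comp (continuous_const.sub continuous_id)).continuousOn
    · exact (hcont.comp (continuous_const.add continuous_id)).continuousOn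
    · intro s hs
      obtain ⟨hs0, hsL⟩ := hs
      rcases eq_or_lt_of_le hsL with heq | hlt'
      · rw [← heq]
        have : (l:ℝ) - s = 0 := by rw [← heq]; ring
        rw [← heq] at this
        rw [this]
        have h0 : f 0 = 0 := by
          simp [hf, zero_pow (by omega : l ≠ 0)]
        rw [h0]
        exact mul_nonneg (Real.exp_pos _).le (pow_nonneg (by linarith) _)
      · exact (reflect_lt l hl hs0 hlt').le
    · exact ⟨(l:ℝ)/2, ⟨by linarith, by linarith⟩,
        reflect_lt l hl (by linarith) (by linarith)⟩
  have hadd : (∫ t in (0:ℝ)..(l:ℝ), f t) + ∫ t in (l:ℝ)..((l:ℝ)+(l:ℝ)), f t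
      = ∫ t in (0:ℝ)..((l:ℝ)+(l:ℝ)), f t :=
    intervalIntegral.integral_add_adjacent_intervals (hcont.intervalIntegrable _ _)
      (hcont.intervalIntegrable _ _)
  have hInt : IntegrableOn f (Ioi (0:ℝ)) := by
    have h := Real.GammaIntegral_convergent (s := (l:ℝ) + 1) (by positivity)
    apply h.congr_fun ?_ measurableSet_Ioi
    intro x hx
    simp [hf, add_sub_cancel_right, Real.rpow_natCast]
  have hGamma : ∫ x in Ioi (0:ℝ), f x = (Nat.factorial l : ℝ) := by
    have hg1 := Real.Gamma_eq_integral (s := (l:ℝ) + 1) (by positivity)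
    have hg2 : Real.Gamma ((l:ℝ) + 1) = Nat.factorial l := Real.Gamma_nat_eq_factorial l
    rw [← hg2, hg1]
    apply setIntegral_congr_fun measurableSet_Ioi
    intro x hx
    simp [hf, add_sub_cancel_right, Real.rpow_natCast]
  have hup : ∫ t in (0:ℝ)..((l:ℝ)+(l:ℝ)), f t ≤ (Nat.factorial l : ℝ) := by
    rw [intervalIntegral.integral_of_le (by linarith : (0:ℝ) ≤ (l:ℝ)+(l:ℝ)), ← hGamma]
    apply setIntegral_mono_set hInt
    · filter_upwards [ae_restrict_mem measurableSet_Ioi] with x hx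
      exact mul_nonneg (Real.exp_pos _).le (pow_nonneg (le_of_lt hx) _)
    · exact HasSubset.Subset.eventuallyLE Ioc_subset_Ioi_self
  have hfacpos : (0:ℝ) < Nat.factorial l := by exact_mod_cast Nat.factorial_pos l
  have hJ : ∫ t in (0:ℝ)..(l:ℝ), f t < (Nat.factorial l : ℝ) / 2 := by
    rw [h1] at hlt
    rw [h2] at hlt
    linarith
  have hpe := partial_eq l (l:ℝ)
  have hdiv : ∫ t in (0:ℝ)..(l:ℝ), Real.exp (-t) * t ^ l / Nat.factorial l
      = (∫ t in (0:ℝ)..(l:ℝ), f t) / Nat.factorial l := by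
    rw [intervalIntegral.integral_div]
  rw [hdiv] at hpe
  have hhalf : (1:ℝ)/2 < Real.exp (-(l:ℝ)) * ∑ ν ∈ range (l + 1), (l:ℝ) ^ ν / Nat.factorial ν := by
    rw [hpe]
    have : (∫ t in (0:ℝ)..(l:ℝ), f t) / Nat.factorial l < 1/2 := by
      rw [div_lt_iff₀ hfacpos]
      linarith
    linarith
  have hkey := mul_lt_mul_of_pos_left hhalf (Real.exp_pos (l:ℝ))
  calc (1/2) * Real.exp (l:ℝ) = Real.exp (l:ℝ) * (1/2) := by ring
    _ < Real.exp (l:ℝ) * (Real.exp (-(l:ℝ)) * ∑ ν ∈ range (l + 1), (l:ℝ) ^ ν / Nat.factorial ν) := hkey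
    _ = ∑ ν ∈ range (l + 1), (l:ℝ) ^ ν / Nat.factorial ν := by
        rw [← mul_assoc, ← Real.exp_add]
        simp

theorem exp_partial_sum_half (l : ℕ) (hl : 1 ≤ l) :
    (∑ ν ∈ Finset.range l, (l : ℝ) ^ ν / Nat.factorial ν) < (1 / 2) * Real.exp l ∧
    (1 / 2) * Real.exp l < ∑ ν ∈ Finset.range (l + 1), (l : ℝ) ^ ν / Nat.factorial ν :=
  ⟨first_half l hl, second_half l hl⟩
end

section
/- For every positive integer k, lim_{ℓ→∞} P_{k,ℓ} exists and equals e^{-k}·∑_{ν=0}^{k-1} k^ν/ν!. -/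
open Filter

lemma first_factor (k : ℕ) (hk : 1 ≤ k) :
    Tendsto (fun l : ℕ => ((l : ℝ) / (l + k)) ^ (k + l)) atTop
      (nhds (Real.exp (-(k : ℝ)))) := by
  have h := (Real.tendsto_one_add_div_pow_exp (-(k : ℝ))).comp (tendsto_add_atTop_nat k)
  refine h.congr fun l => ?_
  have hk0 : (0 : ℝ) < (k : ℝ) := by exact_mod_cast hk
  have hkl : ((l : ℝ) + k) ≠ 0 := by positivity
  have h1 : (1 + -(k : ℝ) / ((l + k : ℕ) : ℝ)) = (l : ℝ) / (l + k) := by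
    push_cast
    field_simp
    ring
  simp only [Function.comp_def, h1]
  rw [add_comm k l]

lemma term_tendsto (k ν : ℕ) (hν : ν < k) :
    Tendsto (fun l : ℕ => (Nat.choose (k + l) ν : ℝ) * ((k : ℝ) / l) ^ ν) atTop
      (nhds ((k : ℝ) ^ ν / Nat.factorial ν)) := by
  have hfac : (Nat.factorial ν : ℝ) ≠ 0 := by positivity
  have key : ∀ l : ℕ, 1 ≤ l → (Nat.choose (k + l) ν : ℝ) * ((k : ℝ) / l) ^ ν =
      (∏ i ∈ Finset.range ν, ((((k : ℝ) - i) / l + 1) * k)) / Nat.factorial ν := by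
    intro l hl
    have hl0 : (l : ℝ) ≠ 0 := by positivity
    have h1 : (Nat.factorial ν : ℝ) * (Nat.choose (k + l) ν : ℝ) =
        ∏ i ∈ Finset.range ν, ((k : ℝ) + l - i) := by
      rw [← Nat.cast_mul, ← Nat.descFactorial_eq_factorial_mul_choose,
        Nat.descFactorial_eq_prod_range, Nat.cast_prod]
      refine Finset.prod_congr rfl fun i hi => ?_
      have hik : i ≤ k + l := by
        have := Finset.mem_range.mp hi; omega
      push_cast [Nat.cast_sub hik]
      ring
    have h2 : (Nat.choose (k + l) ν : ℝ) =
        (∏ i ∈ Finset.range ν, ((k : ℝ) + l - i)) / Nat.factorial ν := by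
      field_simp
      linarith [h1]
    rw [h2, div_mul_eq_mul_div]
    congr 1
    have : ((k : ℝ) / l) ^ ν = ∏ _i ∈ Finset.range ν, ((k : ℝ) / l) := by
      rw [Finset.prod_const, Finset.card_range]
    rw [this, ← Finset.prod_mul_distrib]
    refine Finset.prod_congr rfl fun i _ => ?_
    field_simp
    ring
  have hlim : Tendsto
      (fun l : ℕ => (∏ i ∈ Finset.range ν, ((((k : ℝ) - i) / l + 1) * k)) / Nat.factorial ν)
      atTop (nhds ((k : ℝ) ^ ν / Nat.factorial ν)) := by
    have hprod : Tendsto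
        (fun l : ℕ => ∏ i ∈ Finset.range ν, ((((k : ℝ) - i) / l + 1) * k))
        atTop (nhds (∏ _i ∈ Finset.range ν, ((0 + 1) * (k : ℝ)))) := by
      refine tendsto_finset_prod _ fun i _ => ?_
      exact ((tendsto_const_div_atTop_nhds_zero_nat ((k : ℝ) - i)).add
        tendsto_const_nhds).mul_const (k : ℝ)
    have : (∏ _i ∈ Finset.range ν, ((0 + 1) * (k : ℝ))) = (k : ℝ) ^ ν := by
      simp
    rw [this] at hprod
    exact hprod.div_const _
  refine hlim.congr' ?_
  filter_upwards [eventually_ge_atTop 1] with l hl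
  exact (key l hl).symm

theorem P_limit (k : ℕ) (hk : 1 ≤ k) :
    Tendsto (fun l => P k l) atTop
      (nhds (Real.exp (-(k : ℝ)) * ∑ ν ∈ Finset.range k, (k : ℝ) ^ ν / Nat.factorial ν)) := by
  unfold P
  exact (first_factor k hk).mul
    (tendsto_finset_sum _ fun ν hν => term_tendsto k ν (Finset.mem_range.mp hν))
end

section
/- For every positive integer k, lim_{ℓ→∞} (P_{k,ℓ} + P_{ℓ,k}) = 1 - k^k/(e^k·k!). -/
open Filter

lemma P_key (k l : ℕ) (hk : 1 ≤ k) (hl : 1 ≤ l) :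
    P k l + P l k =
      1 - (Nat.choose (k + l) k : ℝ) * k ^ k * l ^ l / (k + l) ^ (k + l) := by
  set n := k + l with hn
  have hk0 : (k : ℝ) ≠ 0 := Nat.cast_ne_zero.mpr (by omega)
  have hl0 : (l : ℝ) ≠ 0 := Nat.cast_ne_zero.mpr (by omega)
  have hn0 : (n : ℝ) ≠ 0 := Nat.cast_ne_zero.mpr (by omega)
  set f : ℕ → ℝ := fun ν => (Nat.choose n ν : ℝ) * k ^ ν * l ^ (n - ν) with hf
  -- total sum
  have htot : ∑ ν ∈ Finset.range (n + 1), f ν = (n : ℝ) ^ n := by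
    have h := add_pow (k : ℝ) (l : ℝ) n
    rw [← Nat.cast_add, ← hn] at h
    rw [h]
    exact Finset.sum_congr rfl (fun ν _ => by simp only [hf]; ring)
  -- splitting
  have hsplit : ∑ ν ∈ Finset.range (n + 1), f ν =
      (∑ ν ∈ Finset.range l, f (n - ν)) + ((∑ ν ∈ Finset.range k, f ν) + f k) := by
    have h1 : ∑ ν ∈ Finset.range (n + 1), f ν
        = ∑ ν ∈ Finset.range (n + 1), f (n - ν) := by
      have h := Finset.sum_range_reflect f (n + 1)
      simp only [Nat.add_sub_cancel] at h
      exact h.symm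
    rw [h1]
    have h2 : n + 1 = l + (k + 1) := by omega
    rw [h2, Finset.sum_range_add]
    congr 1
    have h3 : ∀ i ∈ Finset.range (k + 1), f (n - (l + i)) = f (k + 1 - 1 - i) := by
      intro i hi
      simp only [Finset.mem_range] at hi
      congr 1
      omega
    rw [Finset.sum_congr rfl h3, Finset.sum_range_reflect f (k + 1), Finset.sum_range_succ]
  -- P k l as sum
  have hPkl : P k l = (∑ ν ∈ Finset.range k, f ν) / (n : ℝ) ^ n := by
    rw [P, Finset.mul_sum, Finset.sum_div]
    apply Finset.sum_congr rfl
    intro ν hν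
    simp only [Finset.mem_range] at hν
    have hνn : ν ≤ n := by omega
    simp only [hf]
    rw [pow_sub₀ _ hl0 hνn,
      show ((l : ℝ) + k) = (n : ℝ) by push_cast [hn]; ring,
      show k + l = n from hn.symm]
    field_simp
    have e1 : (n:ℝ)^n * (n:ℝ)⁻¹^n = 1 := by rw [← mul_pow, mul_inv_cancel₀ hn0, one_pow]
    have e2 : (l:ℝ)^ν * (l:ℝ)⁻¹^ν = 1 := by rw [← mul_pow, mul_inv_cancel₀ hl0, one_pow]
    linear_combination ((l:ℝ)^n * (n.choose ν : ℝ) * (k:ℝ)^ν * ((l:ℝ)^ν * (l:ℝ)⁻¹^ν)) * e1 + ((l:ℝ)^n * (n.choose ν : ℝ) * (k:ℝ)^ν) * e2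
  -- P l k as sum
  have hPlk : P l k = (∑ ν ∈ Finset.range l, f (n - ν)) / (n : ℝ) ^ n := by
    rw [P, Finset.mul_sum, Finset.sum_div]
    apply Finset.sum_congr rfl
    intro ν hν
    simp only [Finset.mem_range] at hν
    have hνn : ν ≤ n := by omega
    simp only [hf]
    rw [show l + k = n by omega, Nat.choose_symm hνn,
      show n - (n - ν) = ν by omega,
      pow_sub₀ _ hk0 hνn,
      show ((k : ℝ) + l) = (n : ℝ) by push_cast [hn]; ring]
    field_simp
    have e1 : (n:ℝ)^n * (n:ℝ)⁻¹^n = 1 := by rw [← mul_pow, mul_inv_cancel₀ hn0, one_pow]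
    have e2 : (k:ℝ)^ν * (k:ℝ)⁻¹^ν = 1 := by rw [← mul_pow, mul_inv_cancel₀ hk0, one_pow]
    linear_combination ((k:ℝ)^n * (n.choose ν : ℝ) * (l:ℝ)^ν * ((k:ℝ)^ν * (k:ℝ)⁻¹^ν)) * e1 + ((k:ℝ)^n * (n.choose ν : ℝ) * (l:ℝ)^ν) * e2
  rw [hPkl, hPlk]
  have hfk : f k = (Nat.choose n k : ℝ) * k ^ k * l ^ l := by
    simp only [hf]
    congr 2
    omega
  have hsum : (∑ ν ∈ Finset.range k, f ν) + (∑ ν ∈ Finset.range l, f (n - ν))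
      = (n : ℝ) ^ n - f k := by
    rw [← htot, hsplit]; ring
  rw [← add_div, hsum, hfk]
  have hnpow : ((n : ℝ)) ^ n ≠ 0 := pow_ne_zero _ hn0
  push_cast [hn]
  field_simp

theorem P_sum_limit (k : ℕ) (hk : 1 ≤ k) :
    Tendsto (fun l => P k l + P l k) atTop
      (nhds (1 - (k : ℝ) ^ k / (Real.exp k * Nat.factorial k))) := by
  have hfact : (Nat.factorial k : ℝ) ≠ 0 := Nat.cast_ne_zero.mpr (Nat.factorial_ne_zero k)
  have hkl : Tendsto (fun l : ℕ => ((k : ℝ) + l)) atTop atTop := by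
    apply tendsto_atTop_add_const_left
    exact tendsto_natCast_atTop_atTop
  -- limit of the binomial ratio
  have hA : Tendsto (fun l : ℕ => ((k + l).choose k : ℝ) / ((k : ℝ) + l) ^ k) atTop
      (nhds (1 / (Nat.factorial k : ℝ))) := by
    have hprod : (fun l : ℕ => (1 / (Nat.factorial k : ℝ)) *
          ∏ i ∈ Finset.range k, (1 - (i : ℝ) / (k + l)))
        =ᶠ[atTop] (fun l : ℕ => ((k + l).choose k : ℝ) / ((k : ℝ) + l) ^ k) := by
      filter_upwards [eventually_ge_atTop 1] with l hl
      have hkl0 : ((k : ℝ) + l) ≠ 0 := by positivity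
      have hdesc : ((k + l).descFactorial k : ℝ) = Nat.factorial k * (k + l).choose k := by
        exact_mod_cast congrArg Nat.cast (Nat.descFactorial_eq_factorial_mul_choose (k + l) k)
      have hpr : ((k + l).descFactorial k : ℝ) = ∏ i ∈ Finset.range k, ((k : ℝ) + l - i) := by
        rw [Nat.descFactorial_eq_prod_range]
        push_cast
        apply Finset.prod_congr rfl
        intro i hi
        simp only [Finset.mem_range] at hi
        rw [Nat.cast_sub (by omega)]
        push_cast; ring
      have h2 : ∏ i ∈ Finset.range k, (1 - (i : ℝ) / (k + l))
          = (∏ i ∈ Finset.range k, ((k : ℝ) + l - i)) / ((k : ℝ) + l) ^ k := by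
        rw [show ((k : ℝ) + l) ^ k = ∏ _i ∈ Finset.range k, ((k : ℝ) + l) by
              rw [Finset.prod_const, Finset.card_range],
          ← Finset.prod_div_distrib]
        apply Finset.prod_congr rfl
        intro i _
        field_simp
      rw [h2, ← hpr, hdesc]
      field_simp
    refine Tendsto.congr' hprod ?_
    have honelim : Tendsto (fun l : ℕ => ∏ i ∈ Finset.range k, (1 - (i : ℝ) / (k + l)))
        atTop (nhds 1) := by
      have : Tendsto (fun l : ℕ => ∏ i ∈ Finset.range k, (1 - (i : ℝ) / (k + l)))
          atTop (nhds (∏ _i ∈ Finset.range k, (1 : ℝ))) := by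
        apply tendsto_finset_prod
        intro i _
        have : Tendsto (fun l : ℕ => (i : ℝ) / (k + l)) atTop (nhds 0) :=
          Tendsto.div_atTop tendsto_const_nhds hkl
        simpa using tendsto_const_nhds.sub this
      simpa using this
    have := honelim.const_mul (1 / (Nat.factorial k : ℝ))
    simpa using this
  -- limit of (l/(k+l))^l
  have hB : Tendsto (fun l : ℕ => ((l : ℝ) / (k + l)) ^ l) atTop
      (nhds (Real.exp (-(k : ℝ)))) := by
    have hbase : (fun l : ℕ => ((1 + (k : ℝ) / l) ^ l)⁻¹)
        =ᶠ[atTop] (fun l : ℕ => ((l : ℝ) / (k + l)) ^ l) := by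
      filter_upwards [eventually_ge_atTop 1] with l hl
      have hl0 : (l : ℝ) ≠ 0 := Nat.cast_ne_zero.mpr (by omega)
      rw [← inv_pow]
      congr 1
      rw [inv_eq_iff_eq_inv, inv_div]
      field_simp
      ring
    refine Tendsto.congr' hbase ?_
    have h := Real.tendsto_one_add_div_pow_exp (k : ℝ)
    have hexp : Real.exp (k : ℝ) ≠ 0 := Real.exp_ne_zero _
    have := h.inv₀ hexp
    rw [← Real.exp_neg] at this
    exact this
  -- combine
  have heq : (fun l : ℕ => 1 - (k : ℝ) ^ k *
        (((k + l).choose k : ℝ) / ((k : ℝ) + l) ^ k) * (((l : ℝ) / (k + l)) ^ l))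
      =ᶠ[atTop] (fun l => P k l + P l k) := by
    filter_upwards [eventually_ge_atTop 1] with l hl
    rw [P_key k l hk hl]
    have hkl0 : ((k : ℝ) + l) ≠ 0 := by positivity
    have h1 : ((k : ℝ) + l) ^ (k + l) = ((k : ℝ) + l) ^ k * ((k : ℝ) + l) ^ l :=
      (pow_add _ k l)
    rw [h1, div_pow]
    field_simp
  refine Tendsto.congr' heq ?_
  have h := ((hA.const_mul ((k : ℝ) ^ k)).mul hB).const_sub 1
  convert h using 2
  rw [Real.exp_neg]
  field_simp
end

section
/- There exists a constant C > 0 such that for all x ≥ 1, |∫_0^∞ (1/t)·(1/(e^t - 1) - 1/t + 1/2)·e^{-xt} dt - 1/(12x)| ≤ C/x². -/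
open MeasureTheory

-- key pointwise estimate
lemma key_est (t : ℝ) (ht : 0 < t) :
    |(1 / t) * (1 / (Real.exp t - 1) - 1 / t + 1 / 2) - 1 / 12| ≤ 2 * t := by
  have hE : 0 < Real.exp t - 1 := by
    have : 1 < Real.exp t := by rw [Real.one_lt_exp_iff]; exact ht
    linarith
  have hEt : t ≤ Real.exp t - 1 := by nlinarith [Real.add_one_le_exp t]
  rcases le_or_gt t 1 with h1 | h1
  · have hb := Real.exp_bound (x := t) (by rw [abs_of_pos ht]; exact h1) (n := 4) (by norm_num)
    simp [Finset.sum_range_succ, abs_of_pos ht] at hb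
    norm_num [Nat.factorial] at hb
    rw [abs_le] at hb
    set E := Real.exp t - 1 with hEdef
    have hlo : t + t^2/2 + t^3/6 - t^4*(5/96) ≤ E := by
      rw [hEdef]; nlinarith [hb.1]
    have hhi : E ≤ t + t^2/2 + t^3/6 + t^4*(5/96) := by
      rw [hEdef]; nlinarith [hb.2]
    have h12 : (0:ℝ) ≤ 12 - 6*t + t^2 := by nlinarith
    have p1 := mul_le_mul_of_nonneg_right hlo h12
    have p2 := mul_le_mul_of_nonneg_right hhi h12
    have p3 : 24*t^4 ≤ 24*t^3*E := by nlinarith [pow_pos ht 3]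
    have hN : |12*t - E*(12 - 6*t + t^2)| ≤ 24 * t^3 * E := by
      rw [abs_le]
      constructor
      · nlinarith [ht.le, h1]
      · nlinarith [ht.le, h1]
    have heq : (1/t) * (1/E - 1/t + 1/2) - 1/12
        = (12*t - E*(12 - 6*t + t^2)) / (12 * t^2 * E) := by
      field_simp
      ring
    have hden : (0:ℝ) < 12 * t^2 * E := by nlinarith [mul_pos (pow_pos ht 2) hE]
    rw [heq, abs_div, abs_of_pos hden, div_le_iff₀ hden]
    calc |12*t - E*(12 - 6*t + t^2)| ≤ 24 * t^3 * E := hN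
      _ = 2 * t * (12 * t^2 * E) := by ring
  · have hE1 : (1:ℝ) ≤ Real.exp t - 1 := by nlinarith [Real.add_one_le_exp t]
    have ha1 : 1 / (Real.exp t - 1) ≤ 1 := by
      rw [div_le_one hE]; exact hE1
    have ha0 : 0 < 1 / (Real.exp t - 1) := by positivity
    have hb1 : 1 / t ≤ 1 := by rw [div_le_one ht]; exact h1.le
    have hb0 : 0 < 1 / t := by positivity
    rw [abs_le]
    constructor
    · nlinarith
    · nlinarith

lemma tendsto_texp (x : ℝ) (hx : 0 < x) :
    Filter.Tendsto (fun t : ℝ => t * Real.exp (-x * t)) Filter.atTop (nhds 0) := by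
  have h := ((Real.tendsto_pow_mul_exp_neg_atTop_nhds_zero 1).comp
      (Filter.Tendsto.const_mul_atTop hx Filter.tendsto_id)).const_mul (1/x)
  simp only [mul_zero] at h
  refine h.congr fun t => ?_
  simp only [Function.comp, pow_one, id_eq]
  rw [neg_mul]
  field_simp

lemma tendsto_exp' (x : ℝ) (hx : 0 < x) :
    Filter.Tendsto (fun t : ℝ => Real.exp (-x * t)) Filter.atTop (nhds 0) := by
  have h := (Real.tendsto_pow_mul_exp_neg_atTop_nhds_zero 0).comp
      (Filter.Tendsto.const_mul_atTop hx Filter.tendsto_id)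
  refine h.congr fun t => ?_
  simp [Function.comp, neg_mul]

lemma integral_exp' (x : ℝ) (hx : 0 < x) :
    ∫ t in Set.Ioi (0:ℝ), Real.exp (-x * t) = 1 / x := by
  have hd : ∀ t ∈ Set.Ioi (0:ℝ),
      HasDerivAt (fun t : ℝ => -(Real.exp (-x * t) / x)) (Real.exp (-x * t)) t := by
    intro t _
    have h1 : HasDerivAt (fun t : ℝ => -x * t) (-x) t := by
      simpa using (hasDerivAt_id t).const_mul (-x)
    have h2 := (h1.exp.div_const x).neg
    refine HasDerivAt.congr_deriv h2 ?_
    field_simp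
  have hcont : ContinuousWithinAt (fun t : ℝ => -(Real.exp (-x * t) / x)) (Set.Ici 0) 0 := by
    have h1 : HasDerivAt (fun t : ℝ => -x * t) (-x) (0:ℝ) := by
      simpa using (hasDerivAt_id (0:ℝ)).const_mul (-x)
    exact ((h1.exp.div_const x).neg).continuousAt.continuousWithinAt
  have htend : Filter.Tendsto (fun t : ℝ => -(Real.exp (-x * t) / x))
      Filter.atTop (nhds 0) := by
    have := ((tendsto_exp' x hx).div_const x).neg
    simpa using this
  have := integral_Ioi_of_hasDerivAt_of_nonneg hcont hd
    (fun t _ => (Real.exp_pos _).le) htend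
  rw [this]
  simp

lemma integrable_exp' (x : ℝ) (hx : 0 < x) :
    IntegrableOn (fun t : ℝ => Real.exp (-x * t)) (Set.Ioi (0:ℝ)) :=
  exp_neg_integrableOn_Ioi 0 hx

lemma hasDerivG (x : ℝ) (hx : 0 < x) (t : ℝ) :
    HasDerivAt (fun t : ℝ => -((t/x + 1/x^2) * Real.exp (-x * t)))
      (t * Real.exp (-x * t)) t := by
  have h1 : HasDerivAt (fun t : ℝ => t/x + 1/x^2) (1/x) t :=
    ((hasDerivAt_id t).div_const x).add_const _
  have hexp : HasDerivAt (fun t : ℝ => -x * t) (-x) t := by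
    simpa using (hasDerivAt_id t).const_mul (-x)
  have h2 := ((h1.mul hexp.exp).neg)
  refine HasDerivAt.congr_deriv h2 ?_
  field_simp
  ring

lemma integral_texp (x : ℝ) (hx : 0 < x) :
    ∫ t in Set.Ioi (0:ℝ), t * Real.exp (-x * t) = 1 / x ^ 2 := by
  have htend : Filter.Tendsto (fun t : ℝ => -((t/x + 1/x^2) * Real.exp (-x * t)))
      Filter.atTop (nhds 0) := by
    have h := (((tendsto_texp x hx).const_mul (1/x)).add
      ((tendsto_exp' x hx).const_mul (1/x^2))).neg
    simp only [mul_zero, add_zero, neg_zero] at h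
    refine h.congr fun t => ?_
    ring
  have := integral_Ioi_of_hasDerivAt_of_nonneg
    (hasDerivG x hx 0).continuousAt.continuousWithinAt
    (fun t _ => hasDerivG x hx t)
    (fun t ht => mul_nonneg (le_of_lt ht) (Real.exp_pos _).le) htend
  rw [this]
  simp

lemma integrable_texp (x : ℝ) (hx : 0 < x) :
    IntegrableOn (fun t : ℝ => t * Real.exp (-x * t)) (Set.Ioi (0:ℝ)) := by
  have htend : Filter.Tendsto (fun t : ℝ => -((t/x + 1/x^2) * Real.exp (-x * t)))
      Filter.atTop (nhds 0) := by
    have h := (((tendsto_texp x hx).const_mul (1/x)).add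
      ((tendsto_exp' x hx).const_mul (1/x^2))).neg
    simp only [mul_zero, add_zero, neg_zero] at h
    refine h.congr fun t => ?_
    ring
  exact integrableOn_Ioi_deriv_of_nonneg
    (hasDerivG x hx 0).continuousAt.continuousWithinAt
    (fun t _ => hasDerivG x hx t)
    (fun t ht => mul_nonneg (le_of_lt ht) (Real.exp_pos _).le) htend

theorem laplace_asymp_large :
    ∃ C > 0, ∀ x : ℝ, 1 ≤ x →
      |(∫ t in Set.Ioi (0 : ℝ),
          (1 / t) * (1 / (Real.exp t - 1) - 1 / t + 1 / 2) * Real.exp (-x * t)) -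
        1 / (12 * x)| ≤ C / x ^ 2 := by
  refine ⟨2, by norm_num, fun x hx => ?_⟩
  have hx0 : 0 < x := lt_of_lt_of_le one_pos hx
  set f : ℝ → ℝ := fun t => (1 / t) * (1 / (Real.exp t - 1) - 1 / t + 1 / 2) with hfdef
  -- measurability
  have hcont : ContinuousOn (fun t : ℝ => f t * Real.exp (-x * t)) (Set.Ioi 0) := by
    intro t ht
    have ht0 : (t:ℝ) ≠ 0 := ne_of_gt ht
    have hE : Real.exp t - 1 ≠ 0 := by
      have : 1 < Real.exp t := by rw [Real.one_lt_exp_iff]; exact ht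
      exact ne_of_gt (by linarith)
    have h1 : ContinuousAt (fun t : ℝ => 1 / t) t :=
      continuousAt_const.div continuousAt_id ht0
    have h2 : ContinuousAt (fun t : ℝ => 1 / (Real.exp t - 1)) t :=
      continuousAt_const.div (Real.continuous_exp.continuousAt.sub continuousAt_const) hE
    have h3 : ContinuousAt (fun t : ℝ => Real.exp (-x * t)) t :=
      (Real.continuous_exp.comp (continuous_const.mul continuous_id)).continuousAt
    exact ((h1.mul ((h2.sub h1).add continuousAt_const)).mul h3).continuousWithinAt
  have hmeas : AEStronglyMeasurable (fun t : ℝ => f t * Real.exp (-x * t))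
      (volume.restrict (Set.Ioi 0)) :=
    hcont.aestronglyMeasurable measurableSet_Ioi
  -- integrability of f * exp
  have hdom : IntegrableOn
      (fun t : ℝ => (1/12) * Real.exp (-x * t) + 2 * (t * Real.exp (-x * t)))
      (Set.Ioi (0:ℝ)) :=
    ((integrable_exp' x hx0).const_mul _).add ((integrable_texp x hx0).const_mul 2)
  have hbound : ∀ t ∈ Set.Ioi (0:ℝ),
      ‖f t * Real.exp (-x * t)‖ ≤
        (1/12) * Real.exp (-x * t) + 2 * (t * Real.exp (-x * t)) := by
    intro t ht
    have ht0 : (0:ℝ) < t := ht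
    have hk := key_est t ht0
    have hfb : |f t| ≤ 1/12 + 2 * t := by
      have h' : |f t| - |(1/12 : ℝ)| ≤ |f t - 1/12| := abs_sub_abs_le_abs_sub _ _
      have h'' : |(1/12:ℝ)| = 1/12 := by norm_num
      linarith [hk]
    rw [Real.norm_eq_abs, abs_mul, abs_of_pos (Real.exp_pos _)]
    have := mul_le_mul_of_nonneg_right hfb (Real.exp_pos (-x*t)).le
    linarith [this]
  have hint : IntegrableOn (fun t : ℝ => f t * Real.exp (-x * t)) (Set.Ioi (0:ℝ)) := by
    refine hdom.mono' hmeas ?_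
    filter_upwards [ae_restrict_mem measurableSet_Ioi] with t ht
    exact hbound t ht
  have h12int : IntegrableOn (fun t : ℝ => (1/12) * Real.exp (-x * t)) (Set.Ioi (0:ℝ)) :=
    (integrable_exp' x hx0).const_mul _
  have h12 : ∫ t in Set.Ioi (0:ℝ), (1/12) * Real.exp (-x * t) = 1 / (12 * x) := by
    rw [MeasureTheory.integral_const_mul, integral_exp' x hx0]
    field_simp
  have heq : (∫ t in Set.Ioi (0:ℝ), f t * Real.exp (-x * t)) - 1 / (12 * x)
      = ∫ t in Set.Ioi (0:ℝ), (f t - 1/12) * Real.exp (-x * t) := by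
    rw [← h12, ← integral_sub hint h12int]
    congr 1
    funext t
    ring
  rw [heq]
  have hfin : |∫ t in Set.Ioi (0:ℝ), (f t - 1/12) * Real.exp (-x * t)|
      ≤ ∫ t in Set.Ioi (0:ℝ), 2 * (t * Real.exp (-x * t)) := by
    rw [← Real.norm_eq_abs]
    refine norm_integral_le_of_norm_le ((integrable_texp x hx0).const_mul 2) ?_
    filter_upwards [ae_restrict_mem measurableSet_Ioi] with t ht
    have ht0 : (0:ℝ) < t := ht
    rw [Real.norm_eq_abs, abs_mul, abs_of_pos (Real.exp_pos _)]
    have := mul_le_mul_of_nonneg_right (key_est t ht0) (Real.exp_pos (-x*t)).le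
    nlinarith [Real.exp_pos (-x*t)]
  calc |∫ t in Set.Ioi (0:ℝ), (f t - 1/12) * Real.exp (-x * t)|
      ≤ ∫ t in Set.Ioi (0:ℝ), 2 * (t * Real.exp (-x * t)) := hfin
    _ = 2 / x ^ 2 := by
        rw [MeasureTheory.integral_const_mul, integral_texp x hx0]
        ring
end

section
/- There exists a constant C > 0 such that for all positive integers ℓ, |(√ℓ/(2π))·∑_{ν=1}^∞ 1/(√ν·(ν+ℓ)) - 1/2| ≤ C/√ℓ. -/
open Set MeasureTheory Real

private theorem sha_meas (L : ℝ) (hL : 1 ≤ L) (s : Set ℝ) (hs : MeasurableSet s) (h0 : ∀ t ∈ s, 0 < t) :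
    AEStronglyMeasurable (fun t => 1 / (Real.sqrt t * (t + L))) (volume.restrict s) := by
  apply ContinuousOn.aestronglyMeasurable ?_ hs
  intro t ht
  have ht0 : 0 < t := h0 t ht
  exact ContinuousAt.continuousWithinAt (by
    apply ContinuousAt.div continuousAt_const
    · exact ((Real.continuous_sqrt.continuousAt).mul (by fun_prop))
    · have hst : 0 < Real.sqrt t := Real.sqrt_pos.mpr ht0
      have : 0 < Real.sqrt t * (t + L) := by positivity
      exact this.ne')

private theorem sha_pos (L t : ℝ) (hL : 1 ≤ L) (ht : 0 < t) :
    0 < Real.sqrt t * (t + L) := by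
  have := Real.sqrt_pos.mpr ht
  have hL0 : (0:ℝ) < L := lt_of_lt_of_le one_pos hL
  positivity

private theorem sha_int1 (L : ℝ) (hL : 1 ≤ L) :
    IntegrableOn (fun t => 1 / (Real.sqrt t * (t + L))) (Ioc (0:ℝ) 1) := by
  refine Integrable.mono'
    ((intervalIntegral.intervalIntegrable_rpow' (r := -(1/2)) (by norm_num)).1)
    (sha_meas L hL _ measurableSet_Ioc (fun t ht => ht.1)) ?_
  refine (ae_restrict_iff' measurableSet_Ioc).2 (Filter.Eventually.of_forall fun t ht => ?_)
  have ht0 : 0 < t := ht.1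
  have hst : 0 < Real.sqrt t := Real.sqrt_pos.mpr ht0
  rw [Real.norm_eq_abs, abs_of_nonneg (le_of_lt (by positivity)),
    Real.rpow_neg ht0.le, ← Real.sqrt_eq_rpow, ← one_div]
  apply one_div_le_one_div_of_le hst
  exact le_mul_of_one_le_right hst.le (by linarith)

private theorem sha_int2 (L : ℝ) (hL : 1 ≤ L) :
    IntegrableOn (fun t => 1 / (Real.sqrt t * (t + L))) (Ioi (1:ℝ)) := by
  refine Integrable.mono' (integrableOn_Ioi_rpow_of_lt (a := -(3/2)) (by norm_num) one_pos)
    (sha_meas L hL _ measurableSet_Ioi (fun t ht => lt_trans one_pos ht)) ?_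
  refine (ae_restrict_iff' measurableSet_Ioi).2 (Filter.Eventually.of_forall fun t ht => ?_)
  have ht0 : (0:ℝ) < t := lt_trans one_pos ht
  have hst : 0 < Real.sqrt t := Real.sqrt_pos.mpr ht0
  rw [Real.norm_eq_abs, abs_of_nonneg (le_of_lt (by positivity))]
  have h32 : t ^ (-(3/2):ℝ) = 1 / (Real.sqrt t * t) := by
    rw [Real.rpow_neg ht0.le, ← one_div, show (3/2:ℝ) = 1/2 + 1 by norm_num,
      Real.rpow_add ht0, Real.rpow_one, ← Real.sqrt_eq_rpow]
  rw [h32]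
  apply one_div_le_one_div_of_le (by positivity)
  nlinarith [hst.le]

private theorem sha_int0 (L : ℝ) (hL : 1 ≤ L) :
    IntegrableOn (fun t => 1 / (Real.sqrt t * (t + L))) (Ioi (0:ℝ)) := by
  have : Ioc (0:ℝ) 1 ∪ Ioi 1 = Ioi 0 := Ioc_union_Ioi_eq_Ioi zero_le_one
  rw [← this]
  exact (sha_int1 L hL).union (sha_int2 L hL)

private theorem sha_split (L : ℝ) (hL : 1 ≤ L) :
    ∫ t in Ioi (0:ℝ), 1 / (Real.sqrt t * (t + L)) =
      (∫ t in Ioc (0:ℝ) 1, 1 / (Real.sqrt t * (t + L))) +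
      ∫ t in Ioi (1:ℝ), 1 / (Real.sqrt t * (t + L)) := by
  rw [← Ioc_union_Ioi_eq_Ioi (zero_le_one (α := ℝ))]
  exact setIntegral_union (Ioc_disjoint_Ioi le_rfl) measurableSet_Ioi
    (sha_int1 L hL) (sha_int2 L hL)

private theorem sha_integral (L : ℝ) (hL : 1 ≤ L) :
    ∫ t in Ioi (0:ℝ), 1 / (Real.sqrt t * (t + L)) = π / Real.sqrt L := by
  have hL0 : (0:ℝ) < L := lt_of_lt_of_le one_pos hL
  have hs : 0 < Real.sqrt L := Real.sqrt_pos.mpr hL0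
  have hsq : Real.sqrt L ^ 2 = L := Real.sq_sqrt hL0.le
  have step1 : ∫ x in Ioi (0:ℝ), (L + x ^ 2)⁻¹ = π / (2 * Real.sqrt L) := by
    have h1 : ∀ x : ℝ, (L + x ^ 2)⁻¹ = L⁻¹ * (1 + ((Real.sqrt L)⁻¹ * x) ^ 2)⁻¹ := by
      intro x
      rw [mul_pow, inv_pow, ← hsq]
      field_simp
      rw [Real.sqrt_sq hs.le]
      ring
    simp_rw [h1]
    rw [integral_const_mul, integral_comp_mul_left_Ioi (fun x => (1 + x ^ 2)⁻¹) 0 (inv_pos.mpr hs),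
      mul_zero, smul_eq_mul, integral_Ioi_inv_one_add_sq, Real.arctan_zero, sub_zero, inv_inv]
    field_simp
    exact hsq
  have step2 : ∫ y in Ioi (0:ℝ), 1 / (Real.sqrt y * (y + L))
      = 2 * ∫ x in Ioi (0:ℝ), (L + x ^ 2)⁻¹ := by
    rw [← integral_comp_rpow_Ioi_of_pos (g := fun y => 1 / (Real.sqrt y * (y + L))) two_pos,
      ← integral_const_mul]
    refine setIntegral_congr_fun measurableSet_Ioi fun x hx => ?_
    have hx0 : (0:ℝ) < x := hx
    have h2 : x ^ (2:ℝ) = x ^ 2 := by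
      rw [← Real.rpow_natCast x 2]; norm_num
    have h1 : x ^ ((2:ℝ) - 1) = x := by norm_num
    simp only [h1, h2, smul_eq_mul, Real.sqrt_sq hx0.le]
    field_simp
    ring
  rw [step2, step1]
  field_simp

private theorem sha_Ioc_bound (L : ℝ) (hL : 1 ≤ L) :
    ∫ t in Ioc (0:ℝ) 1, 1 / (Real.sqrt t * (t + L)) ≤ 2 / L := by
  have hL0 : (0:ℝ) < L := lt_of_lt_of_le one_pos hL
  have key : ∫ t in Ioc (0:ℝ) 1, L⁻¹ * t ^ (-(1/2):ℝ) = 2 / L := by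
    rw [integral_const_mul, ← intervalIntegral.integral_of_le (zero_le_one),
      integral_rpow (Or.inl (by norm_num))]
    norm_num
    rw [inv_mul_eq_div]
  rw [← key]
  apply setIntegral_mono_on (sha_int1 L hL)
    (((intervalIntegral.intervalIntegrable_rpow' (r := -(1/2)) (by norm_num)).1).const_mul _)
    measurableSet_Ioc
  intro t ht
  have ht0 : 0 < t := ht.1
  have hst : 0 < Real.sqrt t := Real.sqrt_pos.mpr ht0
  rw [Real.rpow_neg ht0.le, ← Real.sqrt_eq_rpow, ← mul_inv, ← one_div, mul_comm L]
  apply one_div_le_one_div_of_le (by positivity)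
  apply mul_le_mul_of_nonneg_left (by linarith) hst.le

private theorem sha_antitone (L : ℝ) (hL : 1 ≤ L) (s : Set ℝ) (hs : s ⊆ Ici 1) :
    AntitoneOn (fun t => 1 / (Real.sqrt t * (t + L))) s := by
  intro x hx y hy hxy
  have hx1 : (1:ℝ) ≤ x := hs hx
  have hy1 : (1:ℝ) ≤ y := hs hy
  have hx0 : (0:ℝ) < x := lt_of_lt_of_le one_pos hx1
  have hy0 : (0:ℝ) < y := lt_of_lt_of_le one_pos hy1
  apply one_div_le_one_div_of_le (sha_pos L x hL hx0)
  apply mul_le_mul (Real.sqrt_le_sqrt hxy) (by linarith) (by linarith)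
    (Real.sqrt_nonneg y)


private theorem sha_main (L : ℝ) (hL : 1 ≤ L) :
    |Real.sqrt L / (2 * π) *
        (∑' ν : ℕ, 1 / (Real.sqrt ((ν : ℝ) + 1) * (((ν : ℝ) + 1) + L))) - 1 / 2| ≤
      1 / Real.sqrt L := by
  have hL0 : (0:ℝ) < L := lt_of_lt_of_le one_pos hL
  have hs : 0 < Real.sqrt L := Real.sqrt_pos.mpr hL0
  set f : ℝ → ℝ := fun t => 1 / (Real.sqrt t * (t + L)) with hfdef
  set S : ℝ := ∑' ν : ℕ, 1 / (Real.sqrt ((ν : ℝ) + 1) * (((ν : ℝ) + 1) + L)) with hSdef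
  have hterm : ∀ ν : ℕ, (1 : ℝ) / (Real.sqrt ((ν : ℝ) + 1) * (((ν : ℝ) + 1) + L))
      = f ((ν : ℝ) + 1) := fun ν => rfl
  have hfpos : ∀ t : ℝ, 0 < t → 0 < f t := by
    intro t ht
    have := sha_pos L t hL ht
    positivity
  have hfnonneg : ∀ t : ℝ, 0 ≤ f t := by
    intro t
    rcases le_or_gt t 0 with h | h
    · have : Real.sqrt t = 0 := Real.sqrt_eq_zero_of_nonpos h
      simp [hfdef, this]
    · exact (hfpos t h).le
  have hsum : Summable (fun ν : ℕ => 1 / (Real.sqrt ((ν : ℝ) + 1) * (((ν : ℝ) + 1) + L))) := by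
    have hmaj : Summable (fun ν : ℕ => ((ν:ℝ) + 1) ^ (-(3/2) : ℝ)) := by
      have h0 := (Real.summable_nat_rpow (p := -(3/2))).mpr (by norm_num)
      exact_mod_cast (summable_nat_add_iff 1).mpr h0
    apply Summable.of_nonneg_of_le (fun ν => ?_) (fun ν => ?_) hmaj
    · rw [hterm ν]; exact hfnonneg _
    · have hn : (0:ℝ) < (ν:ℝ) + 1 := by positivity
      have h32 : ((ν:ℝ)+1) ^ (-(3/2):ℝ) = 1 / (Real.sqrt ((ν:ℝ)+1) * ((ν:ℝ)+1)) := by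
        rw [Real.rpow_neg hn.le, ← one_div, show (3/2:ℝ) = 1/2 + 1 by norm_num,
          Real.rpow_add hn, Real.rpow_one, ← Real.sqrt_eq_rpow]
      rw [h32]
      apply one_div_le_one_div_of_le (by positivity)
      have := Real.sqrt_nonneg ((ν:ℝ)+1)
      nlinarith
  have hanti : ∀ n : ℕ, AntitoneOn f (Icc (1:ℝ) (1 + n)) :=
    fun n => sha_antitone L hL _ (fun x hx => hx.1)
  -- lower bound
  have hlow : ∫ t in Ioi (1:ℝ), f t ≤ S := by
    have htend : Filter.Tendsto (fun n : ℕ => ∫ t in (1:ℝ)..(1 + n), f t) Filter.atTop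
        (nhds (∫ t in Ioi (1:ℝ), f t)) := by
      apply MeasureTheory.intervalIntegral_tendsto_integral_Ioi _ (sha_int2 L hL)
      exact Filter.tendsto_atTop_add_const_left _ 1 tendsto_natCast_atTop_atTop
    refine le_of_tendsto htend (Filter.Eventually.of_forall fun n => ?_)
    calc ∫ t in (1:ℝ)..(1 + n), f t
        ≤ ∑ i ∈ Finset.range n, f (1 + i) := (hanti n).integral_le_sum
      _ = ∑ i ∈ Finset.range n, 1 / (Real.sqrt ((i : ℝ) + 1) * (((i : ℝ) + 1) + L)) := by
          refine Finset.sum_congr rfl fun i _ => ?_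
          rw [hterm i, add_comm (1:ℝ)]
      _ ≤ S := Summable.sum_le_tsum _ (fun i _ => by rw [hterm i]; exact hfnonneg _) hsum
  -- upper bound
  have hup : S ≤ f 1 + ∫ t in Ioi (1:ℝ), f t := by
    have hInonneg : 0 ≤ ∫ t in Ioi (1:ℝ), f t :=
      setIntegral_nonneg measurableSet_Ioi fun t _ => hfnonneg t
    apply tsum_le_of_sum_range_le (fun i => by rw [hterm i]; exact hfnonneg _)
    intro n
    cases n with
    | zero =>
      simp only [Finset.range_zero, Finset.sum_empty]
      have := hfnonneg 1
      linarith
    | succ m =>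
      have key : ∑ i ∈ Finset.range m, f (1 + (i + 1 : ℕ)) ≤ ∫ t in (1:ℝ)..(1 + m), f t :=
        (hanti m).sum_le_integral
      have hIle : ∫ t in (1:ℝ)..(1 + m), f t ≤ ∫ t in Ioi (1:ℝ), f t := by
        rw [intervalIntegral.integral_of_le (le_add_of_nonneg_right (Nat.cast_nonneg m))]
        apply setIntegral_mono_set (sha_int2 L hL)
          (Filter.Eventually.of_forall fun t => hfnonneg t)
          (HasSubset.Subset.eventuallyLE Ioc_subset_Ioi_self)
      calc ∑ i ∈ Finset.range (m + 1), 1 / (Real.sqrt ((i : ℝ) + 1) * (((i : ℝ) + 1) + L))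
          = 1 / (Real.sqrt ((0:ℕ) + (1:ℝ)) * (((0:ℕ) + (1:ℝ)) + L))
            + ∑ i ∈ Finset.range m, 1 / (Real.sqrt (((i+1 : ℕ) : ℝ) + 1) * ((((i+1:ℕ) : ℝ) + 1) + L)) := by
            rw [Finset.sum_range_succ']
            ring
        _ = f 1 + ∑ i ∈ Finset.range m, f (1 + (i + 1 : ℕ)) := by
            congr 1
            · rw [hterm 0]; norm_num
            · refine Finset.sum_congr rfl fun i _ => ?_
              rw [hterm (i+1)]
              push_cast
              ring_nf
        _ ≤ f 1 + ∫ t in Ioi (1:ℝ), f t := by linarith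
  -- combine
  have hI : (∫ t in Ioc (0:ℝ) 1, f t) + ∫ t in Ioi (1:ℝ), f t = π / Real.sqrt L := by
    rw [← sha_split L hL]; exact sha_integral L hL
  have hIoc0 : 0 ≤ ∫ t in Ioc (0:ℝ) 1, f t :=
    setIntegral_nonneg measurableSet_Ioc fun t _ => hfnonneg t
  have hIoc2 : ∫ t in Ioc (0:ℝ) 1, f t ≤ 2 / L := sha_Ioc_bound L hL
  have hf1 : f 1 ≤ 2 / L := by
    have : f 1 = 1 / (1 + L) := by simp [hfdef]
    rw [this, div_le_div_iff₀ (by linarith) hL0]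
    linarith
  have hband : |S - π / Real.sqrt L| ≤ 2 / L := by
    rw [abs_le]
    constructor <;> [linarith; linarith]
  have hLsq : Real.sqrt L * Real.sqrt L = L := Real.mul_self_sqrt hL0.le
  have hπ : (0:ℝ) < π := Real.pi_pos
  have hhalf : Real.sqrt L / (2 * π) * (π / Real.sqrt L) = 1 / 2 := by
    field_simp
  have hfinal : Real.sqrt L / (2 * π) * S - 1 / 2
      = Real.sqrt L / (2 * π) * (S - π / Real.sqrt L) := by
    rw [mul_sub, hhalf]
  rw [hfinal, abs_mul, abs_of_nonneg (by positivity)]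
  calc Real.sqrt L / (2 * π) * |S - π / Real.sqrt L|
      ≤ Real.sqrt L / (2 * π) * (2 / L) :=
        mul_le_mul_of_nonneg_left hband (by positivity)
    _ ≤ 1 / Real.sqrt L := by
        rw [div_mul_div_comm, div_le_div_iff₀ (by positivity) hs]
        have hπ1 : (1:ℝ) ≤ π := le_trans (by norm_num) Real.pi_gt_three.le
        calc Real.sqrt L * 2 * Real.sqrt L = 2 * L := by
              rw [mul_comm, ← mul_assoc, hLsq]; ring
          _ ≤ 1 * (2 * π * L) := by nlinarith

theorem series_half_approx :
    ∃ C > 0, ∀ l : ℕ, 1 ≤ l →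
      |Real.sqrt l / (2 * Real.pi) *
          (∑' ν : ℕ, 1 / (Real.sqrt (ν + 1) * ((ν + 1 : ℝ) + l))) - 1 / 2| ≤
        C / Real.sqrt l := by
  refine ⟨1, one_pos, fun l hl => ?_⟩
  exact sha_main (l : ℝ) (by exact_mod_cast hl)
end

section
/- There exists a constant C > 0 such that for all integers k, ℓ ≥ 1, |U_{k,ℓ} - (1 - (1/12)·(1/k + 1/ℓ - 1/(k+ℓ)))| ≤ C/min(k,ℓ)², where U_{k,ℓ} = exp(∫_0^∞ (1/t)·(1/(e^t-1) - 1/t + 1/2)·(e^{-(k+ℓ)t} - e^{-kt} - e^{-ℓt}) dt). -/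
set_option maxHeartbeats 1000000


open MeasureTheory

noncomputable def U (k l : ℕ) : ℝ :=
  Real.exp (∫ t in Set.Ioi (0 : ℝ),
    (1 / t) * (1 / (Real.exp t - 1) - 1 / t + 1 / 2) *
      (Real.exp (-(k + l : ℝ) * t) - Real.exp (-(k : ℝ) * t) - Real.exp (-(l : ℝ) * t)))

namespace UAsympAux

open Set

noncomputable def g (t : ℝ) : ℝ := (1 / t) * (1 / (Real.exp t - 1) - 1 / t + 1 / 2)

lemma abs_sub2 (A B : ℝ) : |A - B| ≤ |A| + |B| := by
  calc |A - B| = |A + (-B)| := by ring_nf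
    _ ≤ |A| + |(-B)| := abs_add_le _ _
    _ = |A| + |B| := by rw [abs_neg]

lemma abs_sub3 (A B C : ℝ) : |A - B - C| ≤ |A| + |B| + |C| := by
  calc |A - B - C| ≤ |A - B| + |C| := abs_sub2 _ _
    _ ≤ |A| + |B| + |C| := by linarith [abs_sub2 A B]

lemma exp_sub_one_pos {t : ℝ} (ht : 0 < t) : 0 < Real.exp t - 1 := by
  have : 1 < Real.exp t := by rw [← Real.exp_zero]; exact Real.exp_lt_exp.mpr ht
  linarith

lemma g_contOn : ContinuousOn g (Set.Ioi 0) := by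
  have h1 : ContinuousOn (fun t : ℝ => 1 / t) (Set.Ioi 0) :=
    ContinuousOn.div continuousOn_const continuousOn_id (fun t ht => ne_of_gt ht)
  have h2 : ContinuousOn (fun t : ℝ => 1 / (Real.exp t - 1)) (Set.Ioi 0) :=
    ContinuousOn.div continuousOn_const
      (Real.continuous_exp.continuousOn.sub continuousOn_const)
      (fun t ht => ne_of_gt (exp_sub_one_pos ht))
  exact h1.mul ((h2.sub h1).add continuousOn_const)

lemma g_est_small {t : ℝ} (h0 : 0 < t) (h1 : t ≤ 1) : |g t - 1/12| ≤ 4 * t := by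
  set E := Real.exp t with hEdef
  have hE : t + 1 ≤ E := Real.add_one_le_exp t
  have hEpos : 0 < E - 1 := by linarith
  have hb : |E - (1 + t + t^2/2 + t^3/6 + t^4/24)| ≤ t^5 := by
    have h := Real.exp_bound (x := t) (by rw [abs_of_pos h0]; exact h1) (n := 5) (by norm_num)
    rw [abs_of_pos h0] at h
    simp only [Finset.sum_range_succ, Finset.sum_range_zero] at h
    norm_num [Nat.factorial] at h
    calc |E - (1 + t + t^2/2 + t^3/6 + t^4/24)| ≤ t^5 * (1/100) := by
            convert h using 2
      _ ≤ t^5 := by nlinarith [pow_pos h0 5]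
  obtain ⟨hbl, hbu⟩ := abs_le.mp hb
  have hP0 : (0:ℝ) ≤ 1 - t/2 + t^2/12 := by nlinarith
  have hP1 : 1 - t/2 + t^2/12 ≤ 1 := by nlinarith
  have hrw : g t - 1/12 = (t - (E - 1) * (1 - t/2 + t^2/12)) / (t^2 * (E - 1)) := by
    unfold g
    rw [← hEdef]
    field_simp
    ring
  rw [hrw, abs_div, abs_of_pos (by positivity : (0:ℝ) < t^2*(E-1)),
    div_le_iff₀ (by positivity)]
  rw [abs_le]
  constructor
  · nlinarith [mul_le_mul_of_nonneg_right hbu hP0, pow_pos h0 5, pow_pos h0 4,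
      mul_le_mul_of_nonneg_left hE (by positivity : (0:ℝ) ≤ 4*t^3)]
  · nlinarith [mul_le_mul_of_nonneg_right hbl hP0, pow_pos h0 5, pow_pos h0 4,
      mul_le_mul_of_nonneg_left hE (by positivity : (0:ℝ) ≤ 4*t^3)]

lemma g_est_large {t : ℝ} (h1 : 1 ≤ t) : |g t| ≤ 3 := by
  have h0 : 0 < t := lt_of_lt_of_le one_pos h1
  have hone : (1:ℝ) ≤ Real.exp t - 1 := by
    have h2 : (2:ℝ) ≤ Real.exp 1 := by
      have := Real.add_one_le_exp (1:ℝ); linarith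
    have := Real.exp_le_exp.mpr h1
    linarith
  have hEpos : 0 < Real.exp t - 1 := by linarith
  have ha : |1 / (Real.exp t - 1) - 1 / t + 1 / 2| ≤ 5/2 := by
    have e1 : 0 < 1 / (Real.exp t - 1) := by positivity
    have e2 : 1 / (Real.exp t - 1) ≤ 1 := by rw [div_le_one hEpos]; linarith
    have e3 : 0 < 1 / t := by positivity
    have e4 : 1 / t ≤ 1 := by rw [div_le_one h0]; linarith
    rw [abs_le]; constructor <;> linarith
  have h1t : |1 / t| ≤ 1 := by
    rw [abs_of_pos (by positivity), div_le_one h0]; linarith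
  calc |g t| = |1/t| * |1 / (Real.exp t - 1) - 1 / t + 1 / 2| := abs_mul _ _
    _ ≤ 1 * (5/2) := mul_le_mul h1t ha (abs_nonneg _) one_pos.le
    _ ≤ 3 := by norm_num

lemma g_sub_bound {t : ℝ} (h0 : 0 < t) : |g t - 1/12| ≤ 4 * t := by
  rcases le_or_gt t 1 with h1 | h1
  · exact g_est_small h0 h1
  · obtain ⟨hl, hu⟩ := abs_le.mp (g_est_large h1.le)
    rw [abs_le]
    constructor <;> nlinarith

lemma g_bound {t : ℝ} (h0 : 0 < t) : |g t| ≤ 5 := by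
  rcases le_or_gt t 1 with h1 | h1
  · obtain ⟨hl, hu⟩ := abs_le.mp (g_est_small h0 h1)
    rw [abs_le]
    constructor <;> nlinarith
  · exact (g_est_large h1.le).trans (by norm_num)

lemma int_exp {x : ℝ} (hx : 0 < x) :
    ∫ t in Set.Ioi (0:ℝ), Real.exp (-x * t) = 1 / x := by
  have h := Real.integral_rpow_mul_exp_neg_mul_Ioi (a := 1) one_pos hx
  simp only [sub_self, Real.rpow_zero, one_mul, Real.Gamma_one, mul_one, Real.rpow_one] at h
  rw [← h]
  refine setIntegral_congr_fun measurableSet_Ioi (fun t ht => ?_)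
  rw [neg_mul]

lemma integrable_g_exp {x : ℝ} (hx : 1 ≤ x) :
    IntegrableOn (fun t => g t * Real.exp (-x * t)) (Set.Ioi 0) := by
  have hx0 : 0 < x := lt_of_lt_of_le one_pos hx
  refine Integrable.mono' ((exp_neg_integrableOn_Ioi 0 one_pos).const_mul 5) ?_ ?_
  · exact (g_contOn.mul (Real.continuous_exp.comp
      (by continuity : Continuous fun t : ℝ => -x * t)).continuousOn).aestronglyMeasurable
      measurableSet_Ioi
  · filter_upwards [ae_restrict_mem measurableSet_Ioi] with t ht
    have h0 : (0:ℝ) < t := ht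
    have hee : Real.exp (-x * t) ≤ Real.exp (-1 * t) :=
      Real.exp_le_exp.mpr (by nlinarith)
    rw [norm_mul, Real.norm_eq_abs, Real.norm_eq_abs, abs_of_pos (Real.exp_pos _)]
    exact mul_le_mul (g_bound h0) hee (Real.exp_pos _).le (by norm_num)

noncomputable def IU (x : ℝ) : ℝ := ∫ t in Set.Ioi (0:ℝ), g t * Real.exp (-x * t)

lemma IU_est {x : ℝ} (hx : 1 ≤ x) : |IU x - 1/(12*x)| ≤ 16 / x^2 := by
  have hx0 : 0 < x := lt_of_lt_of_le one_pos hx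
  have h1 := integrable_g_exp hx
  have h2 : IntegrableOn (fun t => (1/12 : ℝ) * Real.exp (-x*t)) (Set.Ioi 0) :=
    (exp_neg_integrableOn_Ioi 0 hx0).const_mul _
  have heq : IU x - 1/(12*x) = ∫ t in Set.Ioi (0:ℝ), (g t - 1/12) * Real.exp (-x*t) := by
    rw [show (fun t => (g t - 1/12) * Real.exp (-x*t))
        = fun t => g t * Real.exp (-x*t) - (1/12) * Real.exp (-x*t) from
        funext fun t => by ring,
      integral_sub h1 h2, integral_const_mul, int_exp hx0]
    unfold IU
    ring
  rw [heq]
  have hint : Integrable (fun t => (8/x) * Real.exp (-(x/2)*t))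
      (volume.restrict (Set.Ioi (0:ℝ))) :=
    (exp_neg_integrableOn_Ioi 0 (by positivity)).const_mul _
  have hbound : ∀ᵐ t ∂(volume.restrict (Set.Ioi (0:ℝ))),
      ‖(g t - 1/12) * Real.exp (-x*t)‖ ≤ (8/x) * Real.exp (-(x/2)*t) := by
    filter_upwards [ae_restrict_mem measurableSet_Ioi] with t ht
    have h0 : (0:ℝ) < t := ht
    rw [norm_mul, Real.norm_eq_abs, Real.norm_eq_abs, abs_of_pos (Real.exp_pos _)]
    have hg := g_sub_bound h0
    have hsplit : Real.exp (-x*t) = Real.exp (-(x/2)*t) * Real.exp (-(x/2)*t) := by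
      rw [← Real.exp_add]
      congr 1
      ring
    have hem : 0 < Real.exp (-(x/2)*t) := Real.exp_pos _
    have hte : t * Real.exp (-(x/2)*t) ≤ 2/x := by
      have hu : x*t/2 ≤ Real.exp (x*t/2) := by
        have := Real.add_one_le_exp (x*t/2); linarith
      have hprod : Real.exp (-(x/2)*t) * Real.exp (x*t/2) = 1 := by
        rw [← Real.exp_add, show -(x/2)*t + x*t/2 = 0 by ring, Real.exp_zero]
      rw [le_div_iff₀ hx0]
      nlinarith [mul_le_mul_of_nonneg_right hu hem.le]
    calc |g t - 1/12| * Real.exp (-x*t) ≤ (4*t) * Real.exp (-x*t) :=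
          mul_le_mul_of_nonneg_right hg (Real.exp_pos _).le
      _ = 4 * (t * Real.exp (-(x/2)*t)) * Real.exp (-(x/2)*t) := by rw [hsplit]; ring
      _ ≤ 4 * (2/x) * Real.exp (-(x/2)*t) := by
          have := mul_le_mul_of_nonneg_right
            (mul_le_mul_of_nonneg_left hte (by norm_num : (0:ℝ) ≤ 4)) hem.le
          linarith
      _ = (8/x) * Real.exp (-(x/2)*t) := by ring
  calc |∫ t in Set.Ioi (0:ℝ), (g t - 1/12) * Real.exp (-x*t)|
      ≤ ∫ t in Set.Ioi (0:ℝ), (8/x) * Real.exp (-(x/2)*t) := by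
        rw [← Real.norm_eq_abs]
        exact norm_integral_le_of_norm_le hint hbound
    _ = 16 / x^2 := by
        rw [integral_const_mul, int_exp (by positivity : (0:ℝ) < x/2)]
        field_simp
        ring

lemma U_eq (k l : ℕ) (hk : 1 ≤ k) (hl : 1 ≤ l) :
    U k l = Real.exp (IU ((k:ℝ)+(l:ℝ)) - IU (k:ℝ) - IU (l:ℝ)) := by
  have ha : (1:ℝ) ≤ (k:ℝ) := by exact_mod_cast hk
  have hb : (1:ℝ) ≤ (l:ℝ) := by exact_mod_cast hl
  have i1 := integrable_g_exp (x := (k:ℝ)+(l:ℝ)) (by linarith)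
  have i2 := integrable_g_exp (x := (k:ℝ)) ha
  have i3 := integrable_g_exp (x := (l:ℝ)) hb
  have hlin : ∫ t in Set.Ioi (0:ℝ),
        (g t * Real.exp (-((k:ℝ)+(l:ℝ))*t) - g t * Real.exp (-(k:ℝ)*t)
          - g t * Real.exp (-(l:ℝ)*t))
      = IU ((k:ℝ)+(l:ℝ)) - IU (k:ℝ) - IU (l:ℝ) := by
    have i12 : IntegrableOn (fun t => g t * Real.exp (-((k:ℝ)+(l:ℝ))*t)
        - g t * Real.exp (-(k:ℝ)*t)) (Set.Ioi 0) := i1.sub i2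
    rw [integral_sub i12 i3, integral_sub i1 i2]
    rfl
  unfold U
  rw [← hlin]
  congr 1
  refine setIntegral_congr_fun measurableSet_Ioi (fun t ht => ?_)
  unfold g
  ring

lemma main_est (a b : ℝ) (ha : 1 ≤ a) (hb : 1 ≤ b) :
    |Real.exp (IU (a+b) - IU a - IU b) - (1 - 1/12 * (1/a + 1/b - 1/(a+b)))|
      ≤ (2449 + 2401 * (Real.exp 49 + 2)) / (min a b)^2 := by
  set m := min a b with hmdef
  have hm1 : 1 ≤ m := le_min ha hb
  have hm0 : 0 < m := lt_of_lt_of_le one_pos hm1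
  have hma : m ≤ a := min_le_left _ _
  have hmb : m ≤ b := min_le_right _ _
  set E := IU (a+b) - IU a - IU b with hEdef
  set s := 1/a + 1/b - 1/(a+b) with hsdef
  clear_value m E s
  have h16 : ∀ x : ℝ, 1 ≤ x → m ≤ x → |IU x - 1/(12*x)| ≤ 16 / m^2 := by
    intro x hx hmx
    refine (IU_est hx).trans ?_
    have hx0 : 0 < x := lt_of_lt_of_le one_pos hx
    rw [div_le_div_iff₀ (by positivity) (by positivity)]
    nlinarith
  have hkey : |E + s/12| ≤ 48 / m^2 := by
    have e1 := h16 (a+b) (by linarith) (by linarith)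
    have e2 := h16 a ha hma
    have e3 := h16 b hb hmb
    have hre : E + s/12 = (IU (a+b) - 1/(12*(a+b))) - (IU a - 1/(12*a)) - (IU b - 1/(12*b)) := by
      rw [hEdef, hsdef]
      have h1 : a ≠ 0 := by positivity
      have h2 : b ≠ 0 := by positivity
      have h3 : a + b ≠ 0 := by positivity
      field_simp
      ring
    rw [hre]
    calc |(IU (a+b) - 1/(12*(a+b))) - (IU a - 1/(12*a)) - (IU b - 1/(12*b))|
        ≤ |IU (a+b) - 1/(12*(a+b))| + |IU a - 1/(12*a)| + |IU b - 1/(12*b)| := abs_sub3 _ _ _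
      _ ≤ 16/m^2 + 16/m^2 + 16/m^2 := by linarith
      _ = 48/m^2 := by ring
  have hs : |s| ≤ 2/m := by
    have p2 : 1/a ≤ 1/m := one_div_le_one_div_of_le hm0 hma
    have p3 : 1/b ≤ 1/m := one_div_le_one_div_of_le hm0 hmb
    have p4 : 1/(a+b) ≤ 1/a := one_div_le_one_div_of_le (by linarith) (by linarith)
    have p5 : 1/(a+b) ≤ 1/b := one_div_le_one_div_of_le (by linarith) (by linarith)
    have p6 : 0 < 1/(a+b) := by positivity
    have : 2/m = 1/m + 1/m := by ring
    rw [abs_le, hsdef, this]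
    constructor <;> nlinarith [one_div_pos.mpr hm0]
  have hmm : 1/m^2 ≤ 1/m := by
    rw [div_le_div_iff₀ (by positivity) hm0]
    nlinarith
  have hEb : |E| ≤ 49 / m := by
    have h' : E = (E + s/12) - s/12 := by ring
    calc |E| = |(E + s/12) - s/12| := by rw [← h']
      _ ≤ |E + s/12| + |s/12| := abs_sub2 _ _
      _ ≤ 48/m^2 + (2/m)/12 := by
          have : |s/12| = |s|/12 := by rw [abs_div]; norm_num
          rw [this]
          have : |s|/12 ≤ (2/m)/12 := by linarith
          linarith
      _ ≤ 49/m := by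
          have h48 : 48/m^2 ≤ 48/m := by
            rw [div_le_div_iff₀ (by positivity) hm0]; nlinarith
          have heq2 : (2/m)/12 = (1/6)*(1/m) := by ring
          have hmp : 0 < 1/m := by positivity
          have : (2/m)/12 ≤ 1/m := by rw [heq2]; linarith
          calc 48/m^2 + (2/m)/12 ≤ 48/m + 1/m := by linarith
            _ = 49/m := by ring
  have hCpos : (0:ℝ) < 2449 + 2401 * (Real.exp 49 + 2) := by positivity
  by_cases hE1 : |E| ≤ 1
  · have hq := Real.abs_exp_sub_one_sub_id_le hE1
    have hE2 : E^2 ≤ 2401/m^2 := by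
      have h2 : E^2 ≤ (49/m)^2 := by
        rw [← sq_abs]
        exact pow_le_pow_left₀ (abs_nonneg E) hEb 2
      have h3 : ((49:ℝ)/m)^2 = 2401/m^2 := by rw [div_pow]; norm_num
      linarith [h3 ▸ h2]
    have hre : Real.exp E - (1 - 1/12 * s) = (Real.exp E - 1 - E) + (E + s/12) := by ring
    calc |Real.exp E - (1 - 1/12 * s)| ≤ |Real.exp E - 1 - E| + |E + s/12| := by
          rw [hre]; exact abs_add_le _ _
      _ ≤ E^2 + 48/m^2 := add_le_add hq hkey
      _ ≤ 2401/m^2 + 48/m^2 := by linarith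
      _ = 2449/m^2 := by ring
      _ ≤ (2449 + 2401 * (Real.exp 49 + 2)) / m^2 := by
          rw [div_le_div_iff₀ (by positivity) (by positivity)]
          nlinarith [Real.exp_pos (49:ℝ)]
  · push_neg at hE1
    have hmlt : m < 49 := by
      by_contra hcon
      push_neg at hcon
      have : 49/m ≤ 1 := by
        rw [div_le_one hm0]; linarith
      linarith
    have hEle : E ≤ 49 := by
      have : 49/m ≤ 49 := by
        rw [div_le_iff₀ hm0]; nlinarith
      linarith [le_abs_self E]
    have hU : Real.exp E ≤ Real.exp 49 := Real.exp_le_exp.mpr hEle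
    have hU0 : 0 < Real.exp E := Real.exp_pos _
    have hsb : |s| ≤ 2 := by
      refine hs.trans ?_
      rw [div_le_iff₀ hm0]; nlinarith
    obtain ⟨hs1, hs2⟩ := abs_le.mp hsb
    have habs : |Real.exp E - (1 - 1/12 * s)| ≤ Real.exp 49 + 2 := by
      rw [abs_le]
      constructor <;> nlinarith [Real.exp_pos (49:ℝ)]
    have hm2401 : m^2 ≤ 2401 := by nlinarith
    calc |Real.exp E - (1 - 1/12 * s)| ≤ Real.exp 49 + 2 := habs
      _ ≤ (2449 + 2401 * (Real.exp 49 + 2)) / m^2 := by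
          rw [le_div_iff₀ (by positivity)]
          nlinarith [Real.exp_pos (49:ℝ),
            mul_le_mul_of_nonneg_left hm2401 (by positivity : (0:ℝ) ≤ Real.exp 49 + 2)]

end UAsympAux

theorem U_asymp :
    ∃ C > 0, ∀ k l : ℕ, 1 ≤ k → 1 ≤ l →
      |U k l - (1 - (1 / 12) * (1 / (k : ℝ) + 1 / l - 1 / (k + l)))| ≤
        C / (min k l : ℝ) ^ 2 := by
  refine ⟨2449 + 2401 * (Real.exp 49 + 2), by positivity, fun k l hk hl => ?_⟩
  have ha : (1:ℝ) ≤ (k:ℝ) := by exact_mod_cast hk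
  have hb : (1:ℝ) ≤ (l:ℝ) := by exact_mod_cast hl
  rw [UAsympAux.U_eq k l hk hl]
  exact UAsympAux.main_est (k:ℝ) (l:ℝ) ha hb
end
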